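/- arXiv:1104.5686 — 2 statements merged into one kernel-verified Lean document; each statement's English description precedes it below -/
import Mathlib

section
/- If μ = γ/(d+1), then the metric g(μ) on the Cartan–Hartogs domain M_Ω(μ) is Kähler–Einstein: Ric_{αβ̄} = −(d+2) g(μ)_{αβ̄} at every point of M_Ω(μ), for all α,β = 1,…,d+1. -/
open Complex Matrix
open scoped ComplexOrder

noncomputable section

/-- Wirtinger derivative `∂f/∂z_j` of a function `f : ℂ^n → ℂ`. -/
def wD {n : ℕ} (j : Fin n) (f : (Fin n → ℂ) → ℂ) : (Fin n → ℂ) → ℂ :=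
  fun p => (1 / 2 : ℂ) *
    (fderiv ℝ f p (Pi.single j 1) - Complex.I * fderiv ℝ f p (Pi.single j Complex.I))

/-- Conjugate Wirtinger derivative `∂f/∂z̄_j` of a function `f : ℂ^n → ℂ`. -/
def wDbar {n : ℕ} (j : Fin n) (f : (Fin n → ℂ) → ℂ) : (Fin n → ℂ) → ℂ :=
  fun p => (1 / 2 : ℂ) *
    (fderiv ℝ f p (Pi.single j 1) + Complex.I * fderiv ℝ f p (Pi.single j Complex.I))

variable (d : ℕ) (μ : ℝ) (N : (Fin d → ℂ) → ℝ)

/-- `N^μ` as a complex-valued function on `ℂ^d`. -/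
def NmuC : (Fin d → ℂ) → ℂ := fun z => ((N z ^ μ : ℝ) : ℂ)

/-- The Kähler potential `Φ(z,w) = -log(N(z)^μ - |w|²)` of the Cartan–Hartogs domain,
identifying `(z,w)` with the point `p : ℂ^{d+1}`, `z = p ∘ castSucc`, `w = p (last)`. -/
def CHpot : (Fin (d + 1) → ℂ) → ℂ :=
  fun p =>
    -(((Real.log (N (fun j => p j.castSucc) ^ μ - ‖p (Fin.last d)‖ ^ 2)) : ℂ))

/-- The component `g(μ)_{αβ̄} = ∂²Φ/∂z_α∂z̄_β` of the Cartan--Hartogs metric. -/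
def gCH (α β : Fin (d + 1)) : (Fin (d + 1) → ℂ) → ℂ := wD α (wDbar β (CHpot d μ N))

/-- The matrix of the Cartan--Hartogs metric `g(μ)` at a point `p`. -/
def gCHmat (p : Fin (d + 1) → ℂ) : Matrix (Fin (d + 1)) (Fin (d + 1)) ℂ :=
  Matrix.of fun α β => gCH d μ N α β p

/-- The component `g^{Ω(μ)}_{jk̄} = -∂² log N^μ/∂z_j∂z̄_k`. -/
def gOm (j k : Fin d) : (Fin d → ℂ) → ℂ :=
  fun z => -(wD j (wDbar k fun y => ((Real.log (N y ^ μ) : ℝ) : ℂ)) z)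

/-- The matrix of the metric `g^{Ω(μ)}` at a point `z ∈ Ω`. -/
def gOmMat (z : Fin d → ℂ) : Matrix (Fin d) (Fin d) ℂ :=
  Matrix.of fun j k => gOm d μ N j k z

/-- The Ricci tensor `Ric_{αβ̄} = -∂² log det(g(μ))/∂z_α∂z̄_β` of `g(μ)`. -/
def RicCH (α β : Fin (d + 1)) : (Fin (d + 1) → ℂ) → ℂ :=
  fun p => -(wD α (wDbar β fun q => Complex.log ((gCHmat d μ N q).det)) p)

/-- The scalar curvature `κ_{g(μ)} = Σ_{α,β} g(μ)^{βᾱ} Ric_{αβ̄}` of `g(μ)`. -/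
def scalCH : (Fin (d + 1) → ℂ) → ℂ :=
  fun p => ∑ α : Fin (d + 1), ∑ β : Fin (d + 1),
    (gCHmat d μ N p)⁻¹ β α * RicCH d μ N α β p

/-- The curvature tensor
`R_{αβ̄ητ̄} = -g(μ)_{αβ̄ητ̄} + Σ_{ζ,θ} g(μ)^{ζθ̄} g(μ)_{αζ̄η} g(μ)_{θτ̄β̄}` of `g(μ)`. -/
def Rcurv (α β η τ : Fin (d + 1)) : (Fin (d + 1) → ℂ) → ℂ :=
  fun p => -(wDbar τ (wD η (gCH d μ N α β)) p) +
    ∑ ζ : Fin (d + 1), ∑ θ : Fin (d + 1),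
      (gCHmat d μ N p)⁻¹ ζ θ * wD η (gCH d μ N α ζ) p * wDbar β (gCH d μ N θ τ) p

/-- The squared norm `|R|²` of the curvature tensor of `g(μ)`. -/
def Rnorm2 : (Fin (d + 1) → ℂ) → ℂ :=
  fun p => ∑ α : Fin (d+1), ∑ β : Fin (d+1), ∑ η : Fin (d+1), ∑ θ : Fin (d+1),
    ∑ ζ : Fin (d+1), ∑ ν : Fin (d+1), ∑ ξ : Fin (d+1), ∑ τ : Fin (d+1),
      (starRingEnd ℂ) ((gCHmat d μ N p)⁻¹ α ζ) * (gCHmat d μ N p)⁻¹ β ν *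
      (starRingEnd ℂ) ((gCHmat d μ N p)⁻¹ η ξ) * (gCHmat d μ N p)⁻¹ θ τ *
      Rcurv d μ N α β η θ p * (starRingEnd ℂ) (Rcurv d μ N ζ ν ξ τ p)

/-- The squared norm `|Ric|²` of the Ricci tensor of `g(μ)`. -/
def RicNorm2 : (Fin (d + 1) → ℂ) → ℂ :=
  fun p => ∑ α : Fin (d+1), ∑ β : Fin (d+1), ∑ η : Fin (d+1), ∑ τ : Fin (d+1),
    (starRingEnd ℂ) ((gCHmat d μ N p)⁻¹ η τ) * (gCHmat d μ N p)⁻¹ α β *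
    RicCH d μ N η α p * (starRingEnd ℂ) (RicCH d μ N τ β p)

/-- The Laplacian `Δκ_{g(μ)} = Σ_{α,β} g(μ)^{αβ̄} ∂²κ_{g(μ)}/∂z_α∂z̄_β`. -/
def lapScalCH : (Fin (d + 1) → ℂ) → ℂ :=
  fun p => ∑ α : Fin (d+1), ∑ β : Fin (d+1),
    (gCHmat d μ N p)⁻¹ α β * wDbar β (wD α (scalCH d μ N)) p

/-- The Ricci tensor of `g^{Ω(μ)}`. -/
def RicOm (j k : Fin d) : (Fin d → ℂ) → ℂ :=
  fun z => -(wD j (wDbar k fun y => Complex.log ((gOmMat d μ N y).det)) z)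

/-- The scalar curvature `κ_{g^{Ω(μ)}}` of `g^{Ω(μ)}`. -/
def scalOm : (Fin d → ℂ) → ℂ :=
  fun z => ∑ j : Fin d, ∑ k : Fin d, (gOmMat d μ N z)⁻¹ k j * RicOm d μ N j k z

/-- The curvature tensor of `g^{Ω(μ)}`. -/
def RcurvOm (i j k l : Fin d) : (Fin d → ℂ) → ℂ :=
  fun z => -(wDbar l (wD k (gOm d μ N i j)) z) +
    ∑ p : Fin d, ∑ q : Fin d,
      (gOmMat d μ N z)⁻¹ p q * wD k (gOm d μ N i p) z * wDbar j (gOm d μ N q l) z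

/-- The squared norm `|R_{g^{Ω(μ)}}|²` of the curvature tensor of `g^{Ω(μ)}`. -/
def Rnorm2Om : (Fin d → ℂ) → ℂ :=
  fun z => ∑ α : Fin d, ∑ β : Fin d, ∑ η : Fin d, ∑ θ : Fin d,
    ∑ ζ : Fin d, ∑ ν : Fin d, ∑ ξ : Fin d, ∑ τ : Fin d,
      (starRingEnd ℂ) ((gOmMat d μ N z)⁻¹ α ζ) * (gOmMat d μ N z)⁻¹ β ν *
      (starRingEnd ℂ) ((gOmMat d μ N z)⁻¹ η ξ) * (gOmMat d μ N z)⁻¹ θ τ *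
      RcurvOm d μ N α β η θ z * (starRingEnd ℂ) (RcurvOm d μ N ζ ν ξ τ z)

end


open scoped ContDiff

noncomputable section
namespace CHaux

variable {n : ℕ}

lemma wD_congr (j : Fin n) {f g : (Fin n → ℂ) → ℂ} {p : Fin n → ℂ}
    (h : f =ᶠ[nhds p] g) : wD j f p = wD j g p := by
  unfold wD; rw [h.fderiv_eq]

lemma wDbar_congr (j : Fin n) {f g : (Fin n → ℂ) → ℂ} {p : Fin n → ℂ}
    (h : f =ᶠ[nhds p] g) : wDbar j f p = wDbar j g p := by
  unfold wDbar; rw [h.fderiv_eq]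

lemma wD_of_fderiv_eq (j : Fin n) {f g : (Fin n → ℂ) → ℂ} {p : Fin n → ℂ} (c : ℂ)
    (h : ∀ v, fderiv ℝ f p v = c * fderiv ℝ g p v) :
    wD j f p = c * wD j g p := by
  unfold wD; rw [h, h]; ring

lemma wDbar_of_fderiv_eq (j : Fin n) {f g : (Fin n → ℂ) → ℂ} {p : Fin n → ℂ} (c : ℂ)
    (h : ∀ v, fderiv ℝ f p v = c * fderiv ℝ g p v) :
    wDbar j f p = c * wDbar j g p := by
  unfold wDbar; rw [h, h]; ring

lemma wD_mul (j : Fin n) {f g : (Fin n → ℂ) → ℂ} {p : Fin n → ℂ}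
    (hf : DifferentiableAt ℝ f p) (hg : DifferentiableAt ℝ g p) :
    wD j (fun q => f q * g q) p = wD j f p * g p + f p * wD j g p := by
  unfold wD
  rw [fderiv_fun_mul hf hg]
  simp only [ContinuousLinearMap.add_apply, ContinuousLinearMap.smul_apply, smul_eq_mul]
  ring

lemma wDbar_mul (j : Fin n) {f g : (Fin n → ℂ) → ℂ} {p : Fin n → ℂ}
    (hf : DifferentiableAt ℝ f p) (hg : DifferentiableAt ℝ g p) :
    wDbar j (fun q => f q * g q) p = wDbar j f p * g p + f p * wDbar j g p := by
  unfold wDbar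
  rw [fderiv_fun_mul hf hg]
  simp only [ContinuousLinearMap.add_apply, ContinuousLinearMap.smul_apply, smul_eq_mul]
  ring

lemma wD_const_mul (j : Fin n) {f : (Fin n → ℂ) → ℂ} {p : Fin n → ℂ}
    (hf : DifferentiableAt ℝ f p) (c : ℂ) :
    wD j (fun q => c * f q) p = c * wD j f p := by
  apply wD_of_fderiv_eq
  intro v
  rw [fderiv_const_mul hf c]
  simp [smul_eq_mul]

lemma wDbar_const_mul (j : Fin n) {f : (Fin n → ℂ) → ℂ} {p : Fin n → ℂ}
    (hf : DifferentiableAt ℝ f p) (c : ℂ) :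
    wDbar j (fun q => c * f q) p = c * wDbar j f p := by
  apply wDbar_of_fderiv_eq
  intro v
  rw [fderiv_const_mul hf c]
  simp [smul_eq_mul]

lemma wD_neg (j : Fin n) (f : (Fin n → ℂ) → ℂ) (p : Fin n → ℂ) :
    wD j (fun q => -(f q)) p = -wD j f p := by
  have : wD j (fun q => -(f q)) p = (-1 : ℂ) * wD j f p := by
    apply wD_of_fderiv_eq
    intro v
    rw [fderiv_fun_neg]
    simp
  rw [this]; ring

lemma wDbar_neg (j : Fin n) (f : (Fin n → ℂ) → ℂ) (p : Fin n → ℂ) :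
    wDbar j (fun q => -(f q)) p = -wDbar j f p := by
  have : wDbar j (fun q => -(f q)) p = (-1 : ℂ) * wDbar j f p := by
    apply wDbar_of_fderiv_eq
    intro v
    rw [fderiv_fun_neg]
    simp
  rw [this]; ring

lemma wD_inv (j : Fin n) {g : (Fin n → ℂ) → ℂ} {p : Fin n → ℂ}
    (hg : DifferentiableAt ℝ g p) (h0 : g p ≠ 0) :
    wD j (fun q => (g q)⁻¹) p = -((g p) ^ 2)⁻¹ * wD j g p := by
  apply wD_of_fderiv_eq
  intro v
  have h1 : HasFDerivAt (fun q : Fin n → ℂ => (g q)⁻¹)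
      (((ContinuousLinearMap.smulRight (1 : ℂ →L[ℂ] ℂ) (-(g p ^ 2)⁻¹)).restrictScalars ℝ).comp
        (fderiv ℝ g p)) p := by
    exact ((hasDerivAt_inv h0).hasFDerivAt.restrictScalars ℝ).comp p hg.hasFDerivAt
  rw [h1.fderiv]
  simp [ContinuousLinearMap.comp_apply, smul_eq_mul]
  ring

lemma wDbar_inv (j : Fin n) {g : (Fin n → ℂ) → ℂ} {p : Fin n → ℂ}
    (hg : DifferentiableAt ℝ g p) (h0 : g p ≠ 0) :
    wDbar j (fun q => (g q)⁻¹) p = -((g p) ^ 2)⁻¹ * wDbar j g p := by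
  apply wDbar_of_fderiv_eq
  intro v
  have h1 : HasFDerivAt (fun q : Fin n → ℂ => (g q)⁻¹)
      (((ContinuousLinearMap.smulRight (1 : ℂ →L[ℂ] ℂ) (-(g p ^ 2)⁻¹)).restrictScalars ℝ).comp
        (fderiv ℝ g p)) p := by
    exact ((hasDerivAt_inv h0).hasFDerivAt.restrictScalars ℝ).comp p hg.hasFDerivAt
  rw [h1.fderiv]
  simp [ContinuousLinearMap.comp_apply, smul_eq_mul]
  ring





variable {n : ℕ}

lemma fderiv_ofReal_comp {u : (Fin n → ℂ) → ℝ} {p : Fin n → ℂ}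
    (hu : DifferentiableAt ℝ u p) (v : Fin n → ℂ) :
    fderiv ℝ (fun q => ((u q : ℝ) : ℂ)) p v = ((fderiv ℝ u p v : ℝ) : ℂ) := by
  have h : HasFDerivAt (fun q => ((u q : ℝ) : ℂ))
      (Complex.ofRealCLM.comp (fderiv ℝ u p)) p :=
    Complex.ofRealCLM.hasFDerivAt.comp p hu.hasFDerivAt
  rw [h.fderiv]; rfl

/-- chain rule through a real function -/
lemma fderiv_real_comp {u : (Fin n → ℂ) → ℝ} {p : Fin n → ℂ} {φ : ℝ → ℝ} {φ' : ℝ}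
    (hu : DifferentiableAt ℝ u p) (hφ : HasDerivAt φ φ' (u p)) (v : Fin n → ℂ) :
    fderiv ℝ (fun q => ((φ (u q) : ℝ) : ℂ)) p v
      = (φ' : ℂ) * fderiv ℝ (fun q => ((u q : ℝ) : ℂ)) p v := by
  have h : HasFDerivAt (fun q => ((φ (u q) : ℝ) : ℂ))
      (Complex.ofRealCLM.comp ((ContinuousLinearMap.smulRight (1 : ℝ →L[ℝ] ℝ) φ').comp
        (fderiv ℝ u p))) p :=
    Complex.ofRealCLM.hasFDerivAt.comp p (hφ.hasFDerivAt.comp p hu.hasFDerivAt)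
  rw [h.fderiv, fderiv_ofReal_comp hu]
  simp [ContinuousLinearMap.comp_apply, smul_eq_mul, mul_comm]

lemma wD_real_comp (j : Fin n) {u : (Fin n → ℂ) → ℝ} {p : Fin n → ℂ} {φ : ℝ → ℝ} {φ' : ℝ}
    (hu : DifferentiableAt ℝ u p) (hφ : HasDerivAt φ φ' (u p)) :
    wD j (fun q => ((φ (u q) : ℝ) : ℂ)) p = (φ' : ℂ) * wD j (fun q => ((u q : ℝ) : ℂ)) p := by
  unfold wD; rw [fderiv_real_comp hu hφ, fderiv_real_comp hu hφ]; ring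

lemma wDbar_real_comp (j : Fin n) {u : (Fin n → ℂ) → ℝ} {p : Fin n → ℂ} {φ : ℝ → ℝ} {φ' : ℝ}
    (hu : DifferentiableAt ℝ u p) (hφ : HasDerivAt φ φ' (u p)) :
    wDbar j (fun q => ((φ (u q) : ℝ) : ℂ)) p = (φ' : ℂ) * wDbar j (fun q => ((u q : ℝ) : ℂ)) p := by
  unfold wDbar; rw [fderiv_real_comp hu hφ, fderiv_real_comp hu hφ]; ring

end CHaux

section Proj
variable {d : ℕ}
namespace CHaux

def projL (d : ℕ) : ((Fin (d+1) → ℂ) →L[ℝ] (Fin d → ℂ)) :=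
  ContinuousLinearMap.pi fun j => ContinuousLinearMap.proj (R := ℝ) j.castSucc

lemma projL_apply (q : Fin (d+1) → ℂ) (j : Fin d) : projL d q j = q j.castSucc := rfl

lemma projL_eq (q : Fin (d+1) → ℂ) : projL d q = fun j => q j.castSucc := rfl

lemma projL_single_castSucc (c : ℂ) (j : Fin d) :
    projL d (Pi.single j.castSucc c) = Pi.single j c := by
  funext k
  simp [projL_apply, Pi.single_apply, Fin.castSucc_inj]

lemma projL_single_last (c : ℂ) : projL d (Pi.single (Fin.last d) c) = 0 := by
  funext k
  simp [projL_apply, Pi.single_apply, (Fin.castSucc_lt_last k).ne]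

lemma fderiv_comp_projL {h : (Fin d → ℂ) → ℂ} {q : Fin (d+1) → ℂ}
    (hh : DifferentiableAt ℝ h (projL d q)) (v : Fin (d+1) → ℂ) :
    fderiv ℝ (fun q' => h (projL d q')) q v = fderiv ℝ h (projL d q) (projL d v) := by
  have h1 : HasFDerivAt (fun q' => h (projL d q'))
      ((fderiv ℝ h (projL d q)).comp (projL d)) q :=
    hh.hasFDerivAt.comp q (projL d).hasFDerivAt
  rw [h1.fderiv]; rfl

lemma wD_comp_projL (j : Fin d) {h : (Fin d → ℂ) → ℂ} {q : Fin (d+1) → ℂ}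
    (hh : DifferentiableAt ℝ h (projL d q)) :
    wD j.castSucc (fun q' => h (projL d q')) q = wD j h (projL d q) := by
  unfold wD
  rw [fderiv_comp_projL hh, fderiv_comp_projL hh, projL_single_castSucc, projL_single_castSucc]

lemma wDbar_comp_projL (j : Fin d) {h : (Fin d → ℂ) → ℂ} {q : Fin (d+1) → ℂ}
    (hh : DifferentiableAt ℝ h (projL d q)) :
    wDbar j.castSucc (fun q' => h (projL d q')) q = wDbar j h (projL d q) := by
  unfold wDbar
  rw [fderiv_comp_projL hh, fderiv_comp_projL hh, projL_single_castSucc, projL_single_castSucc]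

lemma wD_last_comp_projL {h : (Fin d → ℂ) → ℂ} {q : Fin (d+1) → ℂ}
    (hh : DifferentiableAt ℝ h (projL d q)) :
    wD (Fin.last d) (fun q' => h (projL d q')) q = 0 := by
  unfold wD
  rw [fderiv_comp_projL hh, fderiv_comp_projL hh, projL_single_last, projL_single_last]
  simp

lemma wDbar_last_comp_projL {h : (Fin d → ℂ) → ℂ} {q : Fin (d+1) → ℂ}
    (hh : DifferentiableAt ℝ h (projL d q)) :
    wDbar (Fin.last d) (fun q' => h (projL d q')) q = 0 := by
  unfold wDbar
  rw [fderiv_comp_projL hh, fderiv_comp_projL hh, projL_single_last, projL_single_last]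
  simp

/-- evaluation at the last coordinate -/
lemma fderiv_evalLast (q v : Fin (d+1) → ℂ) :
    fderiv ℝ (fun q' : Fin (d+1) → ℂ => q' (Fin.last d)) q v = v (Fin.last d) := by
  rw [show (fun q' : Fin (d+1) → ℂ => q' (Fin.last d))
      = ⇑(ContinuousLinearMap.proj (R := ℝ) (φ := fun _ : Fin (d+1) => ℂ) (Fin.last d)) from rfl,
    ContinuousLinearMap.fderiv]
  rfl

lemma fderiv_conjLast (q v : Fin (d+1) → ℂ) :
    fderiv ℝ (fun q' : Fin (d+1) → ℂ => (starRingEnd ℂ) (q' (Fin.last d))) q v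
      = (starRingEnd ℂ) (v (Fin.last d)) := by
  rw [show (fun q' : Fin (d+1) → ℂ => (starRingEnd ℂ) (q' (Fin.last d)))
      = ⇑((Complex.conjCLE.toContinuousLinearMap).comp
          (ContinuousLinearMap.proj (R := ℝ) (φ := fun _ : Fin (d+1) => ℂ) (Fin.last d))) from rfl,
    ContinuousLinearMap.fderiv]
  rfl

lemma wD_evalLast (q : Fin (d+1) → ℂ) :
    wD (Fin.last d) (fun q' : Fin (d+1) → ℂ => q' (Fin.last d)) q = 1 := by
  unfold wD
  rw [fderiv_evalLast, fderiv_evalLast]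
  simp [Pi.single_apply]
  norm_num [Complex.ext_iff]

lemma wDbar_evalLast (q : Fin (d+1) → ℂ) :
    wDbar (Fin.last d) (fun q' : Fin (d+1) → ℂ => q' (Fin.last d)) q = 0 := by
  unfold wDbar
  rw [fderiv_evalLast, fderiv_evalLast]
  simp [Pi.single_apply]

lemma wD_castSucc_evalLast (j : Fin d) (q : Fin (d+1) → ℂ) :
    wD j.castSucc (fun q' : Fin (d+1) → ℂ => q' (Fin.last d)) q = 0 := by
  unfold wD
  rw [fderiv_evalLast, fderiv_evalLast]
  simp [Pi.single_apply, (Fin.castSucc_lt_last j).ne]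

lemma wDbar_castSucc_evalLast (j : Fin d) (q : Fin (d+1) → ℂ) :
    wDbar j.castSucc (fun q' : Fin (d+1) → ℂ => q' (Fin.last d)) q = 0 := by
  unfold wDbar
  rw [fderiv_evalLast, fderiv_evalLast]
  simp [Pi.single_apply, (Fin.castSucc_lt_last j).ne]

lemma wD_conjLast (q : Fin (d+1) → ℂ) :
    wD (Fin.last d) (fun q' : Fin (d+1) → ℂ => (starRingEnd ℂ) (q' (Fin.last d))) q = 0 := by
  unfold wD
  rw [fderiv_conjLast, fderiv_conjLast]
  simp [Pi.single_apply]

lemma wDbar_conjLast (q : Fin (d+1) → ℂ) :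
    wDbar (Fin.last d) (fun q' : Fin (d+1) → ℂ => (starRingEnd ℂ) (q' (Fin.last d))) q = 1 := by
  unfold wDbar
  rw [fderiv_conjLast, fderiv_conjLast]
  simp [Pi.single_apply]
  norm_num [Complex.ext_iff]

lemma wD_castSucc_conjLast (j : Fin d) (q : Fin (d+1) → ℂ) :
    wD j.castSucc (fun q' : Fin (d+1) → ℂ => (starRingEnd ℂ) (q' (Fin.last d))) q = 0 := by
  unfold wD
  rw [fderiv_conjLast, fderiv_conjLast]
  simp [Pi.single_apply, (Fin.castSucc_lt_last j).ne]

lemma wDbar_castSucc_conjLast (j : Fin d) (q : Fin (d+1) → ℂ) :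
    wDbar j.castSucc (fun q' : Fin (d+1) → ℂ => (starRingEnd ℂ) (q' (Fin.last d))) q = 0 := by
  unfold wDbar
  rw [fderiv_conjLast, fderiv_conjLast]
  simp [Pi.single_apply, (Fin.castSucc_lt_last j).ne]




variable {n : ℕ}

lemma diffAt {E F : Type*} [NormedAddCommGroup E] [NormedSpace ℝ E] [NormedAddCommGroup F]
    [NormedSpace ℝ F] {f : E → F} {s : Set E} {q : E}
    (hf : ContDiffOn ℝ ∞ f s) (hs : IsOpen s) (hq : q ∈ s) : DifferentiableAt ℝ f q :=
  (hf.contDiffAt (hs.mem_nhds hq)).differentiableAt (by simp)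

lemma contDiffOn_wD (j : Fin n) {f : (Fin n → ℂ) → ℂ} {s : Set (Fin n → ℂ)}
    (hs : IsOpen s) (hf : ContDiffOn ℝ ∞ f s) : ContDiffOn ℝ ∞ (wD j f) s := by
  have hd : ContDiffOn ℝ ∞ (fderiv ℝ f) s := hf.fderiv_of_isOpen hs (by simp)
  exact contDiffOn_const.mul (((hd.clm_apply contDiffOn_const)).sub
    (contDiffOn_const.mul (hd.clm_apply contDiffOn_const)))

lemma contDiffOn_wDbar (j : Fin n) {f : (Fin n → ℂ) → ℂ} {s : Set (Fin n → ℂ)}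
    (hs : IsOpen s) (hf : ContDiffOn ℝ ∞ f s) : ContDiffOn ℝ ∞ (wDbar j f) s := by
  have hd : ContDiffOn ℝ ∞ (fderiv ℝ f) s := hf.fderiv_of_isOpen hs (by simp)
  exact contDiffOn_const.mul (((hd.clm_apply contDiffOn_const)).add
    (contDiffOn_const.mul (hd.clm_apply contDiffOn_const)))



end CHaux
namespace CHaux
variable {n : ℕ}

lemma wD_sub (j : Fin n) {f g : (Fin n → ℂ) → ℂ} {p : Fin n → ℂ}
    (hf : DifferentiableAt ℝ f p) (hg : DifferentiableAt ℝ g p) :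
    wD j (fun q => f q - g q) p = wD j f p - wD j g p := by
  unfold wD
  rw [fderiv_fun_sub hf hg]
  simp only [ContinuousLinearMap.sub_apply]
  ring

lemma wDbar_sub (j : Fin n) {f g : (Fin n → ℂ) → ℂ} {p : Fin n → ℂ}
    (hf : DifferentiableAt ℝ f p) (hg : DifferentiableAt ℝ g p) :
    wDbar j (fun q => f q - g q) p = wDbar j f p - wDbar j g p := by
  unfold wDbar
  rw [fderiv_fun_sub hf hg]
  simp only [ContinuousLinearMap.sub_apply]
  ring

lemma diff_inv {g : (Fin n → ℂ) → ℂ} {p : Fin n → ℂ}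
    (hg : DifferentiableAt ℝ g p) (h0 : g p ≠ 0) :
    DifferentiableAt ℝ (fun q => (g q)⁻¹) p :=
  (((hasDerivAt_inv h0).hasFDerivAt.restrictScalars ℝ).comp p hg.hasFDerivAt).differentiableAt

lemma diff_evalLast {d : ℕ} (q : Fin (d+1) → ℂ) :
    DifferentiableAt ℝ (fun q' : Fin (d+1) → ℂ => q' (Fin.last d)) q :=
  (ContinuousLinearMap.proj (R := ℝ) (φ := fun _ : Fin (d+1) => ℂ) (Fin.last d)).differentiableAt

lemma diff_conjLast {d : ℕ} (q : Fin (d+1) → ℂ) :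
    DifferentiableAt ℝ (fun q' : Fin (d+1) → ℂ => (starRingEnd ℂ) (q' (Fin.last d))) q :=
  ((Complex.conjCLE.toContinuousLinearMap).comp
    (ContinuousLinearMap.proj (R := ℝ) (φ := fun _ : Fin (d+1) => ℂ) (Fin.last d))).differentiableAt

lemma diff_wwbar {d : ℕ} (q : Fin (d+1) → ℂ) :
    DifferentiableAt ℝ
      (fun q' : Fin (d+1) → ℂ => q' (Fin.last d) * (starRingEnd ℂ) (q' (Fin.last d))) q :=
  (diff_evalLast q).mul (diff_conjLast q)

end CHaux

noncomputable section
namespace CHaux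

variable {d : ℕ} {μ γ : ℝ} {N : (Fin d → ℂ) → ℝ} {Ω : Set (Fin d → ℂ)}

def Udom (d : ℕ) (μ : ℝ) (N : (Fin d → ℂ) → ℝ) (Ω : Set (Fin d → ℂ)) : Set (Fin (d+1) → ℂ) :=
  {q | projL d q ∈ Ω ∧ ‖q (Fin.last d)‖ ^ 2 < N (projL d q) ^ μ}

def YR (d : ℕ) (μ : ℝ) (N : (Fin d → ℂ) → ℝ) : (Fin (d+1) → ℂ) → ℝ :=
  fun q => N (projL d q) ^ μ - ‖q (Fin.last d)‖ ^ 2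

def YC (d : ℕ) (μ : ℝ) (N : (Fin d → ℂ) → ℝ) : (Fin (d+1) → ℂ) → ℂ :=
  fun q => ((YR d μ N q : ℝ) : ℂ)

lemma CHpot_eq : CHpot d μ N = fun p => -((Real.log (YR d μ N p) : ℝ) : ℂ) := rfl

lemma YC_eq : YC d μ N = fun q =>
    NmuC d μ N (projL d q) - q (Fin.last d) * (starRingEnd ℂ) (q (Fin.last d)) := by
  funext q
  simp only [YC, YR, NmuC, Complex.ofReal_sub, Complex.mul_conj, Complex.sq_norm]

lemma YR_pos {q : Fin (d+1) → ℂ} (hq : q ∈ Udom d μ N Ω) : 0 < YR d μ N q :=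
  sub_pos.mpr hq.2

lemma hfC (hΩ : IsOpen Ω) (hNsm : ContDiffOn ℝ (⊤ : ℕ∞) N Ω) (hNpos : ∀ z ∈ Ω, 0 < N z) :
    ContDiffOn ℝ ∞ (NmuC d μ N) Ω := by
  have h1 : ContDiffOn ℝ ∞ (fun z => N z ^ μ) Ω := by
    intro z hz
    exact ((hNsm.of_le (by simp) z hz).contDiffAt (hΩ.mem_nhds hz)).rpow_const_of_ne
      (ne_of_gt (hNpos z hz)) |>.contDiffWithinAt
  exact Complex.ofRealCLM.contDiff.comp_contDiffOn h1

lemma hfR (hΩ : IsOpen Ω) (hNsm : ContDiffOn ℝ (⊤ : ℕ∞) N Ω) (hNpos : ∀ z ∈ Ω, 0 < N z) :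
    ContDiffOn ℝ ∞ (fun z => N z ^ μ) Ω := by
  intro z hz
  exact ((hNsm.of_le (by simp) z hz).contDiffAt (hΩ.mem_nhds hz)).rpow_const_of_ne
    (ne_of_gt (hNpos z hz)) |>.contDiffWithinAt

lemma Udom_subset : Udom d μ N Ω ⊆ (projL d) ⁻¹' Ω := fun _ hq => hq.1

lemma Udom_open (hΩ : IsOpen Ω) (hNsm : ContDiffOn ℝ (⊤ : ℕ∞) N Ω) (hNpos : ∀ z ∈ Ω, 0 < N z) :
    IsOpen (Udom d μ N Ω) := by
  have hV : IsOpen ((projL d) ⁻¹' Ω) := hΩ.preimage (projL d).continuous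
  have hYR : ContinuousOn (YR d μ N) ((projL d) ⁻¹' Ω) := by
    apply ContinuousOn.sub
    · apply ContinuousOn.rpow_const
      · exact (hNsm.continuousOn.comp (projL d).continuous.continuousOn (fun q hq => hq))
      · intro q hq; left; exact ne_of_gt (hNpos _ hq)
    · exact (continuous_norm.comp
        ((continuous_apply (Fin.last d)))).pow 2 |>.continuousOn
  have := hYR.isOpen_inter_preimage hV isOpen_Ioi (t := Set.Ioi (0:ℝ))
  convert this using 1
  ext q
  simp only [Udom, Set.mem_setOf_eq, Set.mem_inter_iff, Set.mem_preimage, Set.mem_Ioi, YR]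
  constructor
  · rintro ⟨h1, h2⟩; exact ⟨h1, by linarith⟩
  · rintro ⟨h1, h2⟩; exact ⟨h1, by linarith⟩

end CHaux
end

noncomputable section
namespace CHaux
variable {d : ℕ} {μ γ : ℝ} {N : (Fin d → ℂ) → ℝ} {Ω : Set (Fin d → ℂ)}

lemma hYCsm (hΩ : IsOpen Ω) (hNsm : ContDiffOn ℝ (⊤ : ℕ∞) N Ω) (hNpos : ∀ z ∈ Ω, 0 < N z) :
    ContDiffOn ℝ ∞ (YC d μ N) (Udom d μ N Ω) := by
  rw [YC_eq]
  apply ContDiffOn.sub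
  · exact (hfC hΩ hNsm hNpos).comp ((projL d).contDiff.contDiffOn) Udom_subset
  · apply ContDiffOn.mul
    · exact ((ContinuousLinearMap.proj (R := ℝ) (φ := fun _ : Fin (d+1) => ℂ)
        (Fin.last d)).contDiff.contDiffOn)
    · exact (((Complex.conjCLE.toContinuousLinearMap).comp
        (ContinuousLinearMap.proj (R := ℝ) (φ := fun _ : Fin (d+1) => ℂ)
          (Fin.last d))).contDiff.contDiffOn)

lemma YR_re : YR d μ N = fun q => (YC d μ N q).re :=
  funext fun q => (Complex.ofReal_re _).symm

lemma hYRdiff (hΩ : IsOpen Ω) (hNsm : ContDiffOn ℝ (⊤ : ℕ∞) N Ω) (hNpos : ∀ z ∈ Ω, 0 < N z)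
    {q : Fin (d+1) → ℂ} (hq : q ∈ Udom d μ N Ω) : DifferentiableAt ℝ (YR d μ N) q := by
  rw [YR_re]
  exact Complex.reCLM.differentiableAt.comp q
    (diffAt (hYCsm hΩ hNsm hNpos) (Udom_open hΩ hNsm hNpos) hq)

lemma hYCne {q : Fin (d+1) → ℂ} (hq : q ∈ Udom d μ N Ω) : YC d μ N q ≠ 0 :=
  Complex.ofReal_ne_zero.mpr (ne_of_gt (YR_pos hq))

section FirstDeriv
variable (hΩ : IsOpen Ω) (hNsm : ContDiffOn ℝ (⊤ : ℕ∞) N Ω) (hNpos : ∀ z ∈ Ω, 0 < N z)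
  {q : Fin (d+1) → ℂ} (hq : q ∈ Udom d μ N Ω)
include hΩ hNsm hNpos hq

lemma diffNmuC_proj : DifferentiableAt ℝ
    (fun q' : Fin (d+1) → ℂ => NmuC d μ N (projL d q')) q := by
  have h1 : DifferentiableAt ℝ (NmuC d μ N) (projL d q) :=
    diffAt (hfC hΩ hNsm hNpos) hΩ hq.1
  exact h1.comp q (projL d).differentiableAt

lemma wD_YC_castSucc (j : Fin d) :
    wD j.castSucc (YC d μ N) q = wD j (NmuC d μ N) (projL d q) := by
  rw [YC_eq]
  rw [wD_sub j.castSucc (diffNmuC_proj hΩ hNsm hNpos hq) (diff_wwbar q)]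
  rw [wD_comp_projL j (diffAt (hfC hΩ hNsm hNpos) hΩ hq.1)]
  rw [wD_mul j.castSucc (diff_evalLast q) (diff_conjLast q), wD_castSucc_evalLast,
    wD_castSucc_conjLast]
  ring

lemma wD_YC_last :
    wD (Fin.last d) (YC d μ N) q = -(starRingEnd ℂ) (q (Fin.last d)) := by
  rw [YC_eq]
  rw [wD_sub (Fin.last d) (diffNmuC_proj hΩ hNsm hNpos hq) (diff_wwbar q)]
  rw [wD_last_comp_projL (diffAt (hfC hΩ hNsm hNpos) hΩ hq.1)]
  rw [wD_mul (Fin.last d) (diff_evalLast q) (diff_conjLast q), wD_evalLast, wD_conjLast]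
  ring

lemma wDbar_YC_castSucc (k : Fin d) :
    wDbar k.castSucc (YC d μ N) q = wDbar k (NmuC d μ N) (projL d q) := by
  rw [YC_eq]
  rw [wDbar_sub k.castSucc (diffNmuC_proj hΩ hNsm hNpos hq) (diff_wwbar q)]
  rw [wDbar_comp_projL k (diffAt (hfC hΩ hNsm hNpos) hΩ hq.1)]
  rw [wDbar_mul k.castSucc (diff_evalLast q) (diff_conjLast q), wDbar_castSucc_evalLast,
    wDbar_castSucc_conjLast]
  ring

lemma wDbar_YC_last :
    wDbar (Fin.last d) (YC d μ N) q = -(q (Fin.last d)) := by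
  rw [YC_eq]
  rw [wDbar_sub (Fin.last d) (diffNmuC_proj hΩ hNsm hNpos hq) (diff_wwbar q)]
  rw [wDbar_last_comp_projL (diffAt (hfC hΩ hNsm hNpos) hΩ hq.1)]
  rw [wDbar_mul (Fin.last d) (diff_evalLast q) (diff_conjLast q), wDbar_evalLast, wDbar_conjLast]
  ring

lemma wD_wDbar_YC_cc (j k : Fin d) :
    wD j.castSucc (wDbar k.castSucc (YC d μ N)) q
      = wD j (wDbar k (NmuC d μ N)) (projL d q) := by
  have hEq : Set.EqOn (wDbar k.castSucc (YC d μ N))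
      (fun q' => wDbar k (NmuC d μ N) (projL d q')) (Udom d μ N Ω) :=
    fun q' hq' => wDbar_YC_castSucc hΩ hNsm hNpos hq' k
  rw [wD_congr j.castSucc (Filter.eventuallyEq_of_mem
    ((Udom_open hΩ hNsm hNpos).mem_nhds hq) hEq)]
  exact wD_comp_projL j (diffAt (contDiffOn_wDbar k hΩ (hfC hΩ hNsm hNpos)) hΩ hq.1)

lemma wD_wDbar_YC_lc (k : Fin d) :
    wD (Fin.last d) (wDbar k.castSucc (YC d μ N)) q = 0 := by
  have hEq : Set.EqOn (wDbar k.castSucc (YC d μ N))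
      (fun q' => wDbar k (NmuC d μ N) (projL d q')) (Udom d μ N Ω) :=
    fun q' hq' => wDbar_YC_castSucc hΩ hNsm hNpos hq' k
  rw [wD_congr (Fin.last d) (Filter.eventuallyEq_of_mem
    ((Udom_open hΩ hNsm hNpos).mem_nhds hq) hEq)]
  exact wD_last_comp_projL (diffAt (contDiffOn_wDbar k hΩ (hfC hΩ hNsm hNpos)) hΩ hq.1)

lemma wD_wDbar_YC_cl (j : Fin d) :
    wD j.castSucc (wDbar (Fin.last d) (YC d μ N)) q = 0 := by
  have hEq : Set.EqOn (wDbar (Fin.last d) (YC d μ N))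
      (fun q' => -(q' (Fin.last d))) (Udom d μ N Ω) :=
    fun q' hq' => wDbar_YC_last hΩ hNsm hNpos hq'
  rw [wD_congr j.castSucc (Filter.eventuallyEq_of_mem
    ((Udom_open hΩ hNsm hNpos).mem_nhds hq) hEq)]
  rw [wD_neg, wD_castSucc_evalLast]
  ring

lemma wD_wDbar_YC_ll :
    wD (Fin.last d) (wDbar (Fin.last d) (YC d μ N)) q = -1 := by
  have hEq : Set.EqOn (wDbar (Fin.last d) (YC d μ N))
      (fun q' => -(q' (Fin.last d))) (Udom d μ N Ω) :=
    fun q' hq' => wDbar_YC_last hΩ hNsm hNpos hq'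
  rw [wD_congr (Fin.last d) (Filter.eventuallyEq_of_mem
    ((Udom_open hΩ hNsm hNpos).mem_nhds hq) hEq)]
  rw [wD_neg, wD_evalLast]

end FirstDeriv
end CHaux
end

noncomputable section
namespace CHaux
variable {d : ℕ} {μ γ : ℝ} {N : (Fin d → ℂ) → ℝ} {Ω : Set (Fin d → ℂ)}

lemma hYRsm (hΩ : IsOpen Ω) (hNsm : ContDiffOn ℝ (⊤ : ℕ∞) N Ω) (hNpos : ∀ z ∈ Ω, 0 < N z) :
    ContDiffOn ℝ ∞ (YR d μ N) (Udom d μ N Ω) := by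
  rw [YR_re]
  exact Complex.reCLM.contDiff.comp_contDiffOn (hYCsm hΩ hNsm hNpos)

lemma hCHpotsm (hΩ : IsOpen Ω) (hNsm : ContDiffOn ℝ (⊤ : ℕ∞) N Ω) (hNpos : ∀ z ∈ Ω, 0 < N z) :
    ContDiffOn ℝ ∞ (CHpot d μ N) (Udom d μ N Ω) := by
  rw [CHpot_eq]
  exact (Complex.ofRealCLM.contDiff.comp_contDiffOn
    ((hYRsm hΩ hNsm hNpos).log (fun q hq => ne_of_gt (YR_pos hq)))).neg

section Pot
variable (hΩ : IsOpen Ω) (hNsm : ContDiffOn ℝ (⊤ : ℕ∞) N Ω) (hNpos : ∀ z ∈ Ω, 0 < N z)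
  {q : Fin (d+1) → ℂ} (hq : q ∈ Udom d μ N Ω)
include hΩ hNsm hNpos hq

lemma wDbar_CHpot (β : Fin (d+1)) :
    wDbar β (CHpot d μ N) q = -((YC d μ N q)⁻¹ * wDbar β (YC d μ N) q) := by
  rw [CHpot_eq]
  rw [wDbar_neg β (fun p => ((Real.log (YR d μ N p) : ℝ) : ℂ)) q]
  rw [wDbar_real_comp β (hYRdiff hΩ hNsm hNpos hq)
    (Real.hasDerivAt_log (ne_of_gt (YR_pos hq)))]
  rw [Complex.ofReal_inv]
  rfl

lemma gCH_formula (α β : Fin (d+1)) :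
    gCH d μ N α β q = -((YC d μ N q)⁻¹ * wD α (wDbar β (YC d μ N)) q)
      + ((YC d μ N q)⁻¹) ^ 2 * wD α (YC d μ N) q * wDbar β (YC d μ N) q := by
  have hUo := Udom_open (μ := μ) hΩ hNsm hNpos
  have hEq : Set.EqOn (wDbar β (CHpot d μ N))
      (fun q' => -((YC d μ N q')⁻¹ * wDbar β (YC d μ N) q')) (Udom d μ N Ω) :=
    fun q' hq' => wDbar_CHpot hΩ hNsm hNpos hq' β
  have hdiffYC : DifferentiableAt ℝ (YC d μ N) q := diffAt (hYCsm hΩ hNsm hNpos) hUo hq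
  have hdiffB : DifferentiableAt ℝ (wDbar β (YC d μ N)) q :=
    diffAt (contDiffOn_wDbar β hUo (hYCsm hΩ hNsm hNpos)) hUo hq
  show wD α (wDbar β (CHpot d μ N)) q = _
  rw [wD_congr α (Filter.eventuallyEq_of_mem (hUo.mem_nhds hq) hEq)]
  rw [wD_neg]
  rw [wD_mul α (diff_inv hdiffYC (hYCne hq)) hdiffB]
  rw [wD_inv α hdiffYC (hYCne hq)]
  field_simp
  ring

lemma gCH_cc (j k : Fin d) :
    gCH d μ N j.castSucc k.castSucc q
      = -((YC d μ N q)⁻¹ * wD j (wDbar k (NmuC d μ N)) (projL d q))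
        + ((YC d μ N q)⁻¹) ^ 2 * wD j (NmuC d μ N) (projL d q)
          * wDbar k (NmuC d μ N) (projL d q) := by
  rw [gCH_formula hΩ hNsm hNpos hq, wD_wDbar_YC_cc hΩ hNsm hNpos hq,
    wD_YC_castSucc hΩ hNsm hNpos hq, wDbar_YC_castSucc hΩ hNsm hNpos hq]

lemma gCH_cl (j : Fin d) :
    gCH d μ N j.castSucc (Fin.last d) q
      = -(((YC d μ N q)⁻¹) ^ 2 * q (Fin.last d) * wD j (NmuC d μ N) (projL d q)) := by
  rw [gCH_formula hΩ hNsm hNpos hq, wD_wDbar_YC_cl hΩ hNsm hNpos hq,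
    wD_YC_castSucc hΩ hNsm hNpos hq, wDbar_YC_last hΩ hNsm hNpos hq]
  ring

lemma gCH_lc (k : Fin d) :
    gCH d μ N (Fin.last d) k.castSucc q
      = -(((YC d μ N q)⁻¹) ^ 2 * (starRingEnd ℂ) (q (Fin.last d))
          * wDbar k (NmuC d μ N) (projL d q)) := by
  rw [gCH_formula hΩ hNsm hNpos hq, wD_wDbar_YC_lc hΩ hNsm hNpos hq,
    wD_YC_last hΩ hNsm hNpos hq, wDbar_YC_castSucc hΩ hNsm hNpos hq]
  ring

lemma gCH_ll :
    gCH d μ N (Fin.last d) (Fin.last d) q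
      = (YC d μ N q)⁻¹ + ((YC d μ N q)⁻¹) ^ 2 * (starRingEnd ℂ) (q (Fin.last d))
          * q (Fin.last d) := by
  rw [gCH_formula hΩ hNsm hNpos hq, wD_wDbar_YC_ll hΩ hNsm hNpos hq,
    wD_YC_last hΩ hNsm hNpos hq, wDbar_YC_last hΩ hNsm hNpos hq]
  ring

end Pot

section Om
variable (hΩ : IsOpen Ω) (hNsm : ContDiffOn ℝ (⊤ : ℕ∞) N Ω) (hNpos : ∀ z ∈ Ω, 0 < N z)
  {z' : Fin d → ℂ} (hz' : z' ∈ Ω)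
include hΩ hNsm hNpos hz'

omit hΩ hNsm in
lemma NmuC_ne : NmuC d μ N z' ≠ 0 :=
  Complex.ofReal_ne_zero.mpr (ne_of_gt (Real.rpow_pos_of_pos (hNpos z' hz') μ))

lemma wDbar_logf (k : Fin d) :
    wDbar k (fun y => ((Real.log (N y ^ μ) : ℝ) : ℂ)) z'
      = (NmuC d μ N z')⁻¹ * wDbar k (NmuC d μ N) z' := by
  rw [wDbar_real_comp k (diffAt (hfR hΩ hNsm hNpos) hΩ hz')
    (Real.hasDerivAt_log (ne_of_gt (Real.rpow_pos_of_pos (hNpos z' hz') μ)))]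
  rw [Complex.ofReal_inv]
  rfl

lemma gOm_formula (j k : Fin d) :
    gOm d μ N j k z'
      = ((NmuC d μ N z')⁻¹) ^ 2 * wD j (NmuC d μ N) z' * wDbar k (NmuC d μ N) z'
        - (NmuC d μ N z')⁻¹ * wD j (wDbar k (NmuC d μ N)) z' := by
  have hEq : Set.EqOn (wDbar k (fun y => ((Real.log (N y ^ μ) : ℝ) : ℂ)))
      (fun y => (NmuC d μ N y)⁻¹ * wDbar k (NmuC d μ N) y) Ω :=
    fun y hy => wDbar_logf hΩ hNsm hNpos hy k
  have hdiffF : DifferentiableAt ℝ (NmuC d μ N) z' := diffAt (hfC hΩ hNsm hNpos) hΩ hz'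
  have hdiffB : DifferentiableAt ℝ (wDbar k (NmuC d μ N)) z' :=
    diffAt (contDiffOn_wDbar k hΩ (hfC hΩ hNsm hNpos)) hΩ hz'
  show -(wD j (wDbar k fun y => ((Real.log (N y ^ μ) : ℝ) : ℂ)) z') = _
  rw [wD_congr j (Filter.eventuallyEq_of_mem (hΩ.mem_nhds hz') hEq)]
  rw [wD_mul j (diff_inv hdiffF (NmuC_ne hNpos hz')) hdiffB]
  rw [wD_inv j hdiffF (NmuC_ne hNpos hz')]
  field_simp
  ring

end Om
end CHaux
end

noncomputable section
namespace CHaux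
variable {d : ℕ} {μ γ : ℝ} {N : (Fin d → ℂ) → ℝ} {Ω : Set (Fin d → ℂ)}

lemma finSumFinEquiv_symm_castSucc (j : Fin d) :
    (finSumFinEquiv (m := d) (n := 1)).symm j.castSucc = Sum.inl j := by
  rw [Equiv.symm_apply_eq]; rfl

lemma finSumFinEquiv_symm_last :
    (finSumFinEquiv (m := d) (n := 1)).symm (Fin.last d) = Sum.inr 0 := by
  rw [Equiv.symm_apply_eq]; rfl

lemma detM (hΩ : IsOpen Ω) (hNsm : ContDiffOn ℝ (⊤ : ℕ∞) N Ω) (hNpos : ∀ z ∈ Ω, 0 < N z)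
    (hMA : ∀ z ∈ Ω, (gOmMat d μ N z).det = ((N z ^ (-γ) : ℝ) : ℂ))
    {q : Fin (d+1) → ℂ} (hq : q ∈ Udom d μ N Ω) :
    (gCHmat d μ N q).det = (NmuC d μ N (projL d q)) ^ (d+1) * ((YC d μ N q)⁻¹) ^ (d+2)
      * ((N (projL d q) ^ (-γ) : ℝ) : ℂ) := by
  have hYne : YC d μ N q ≠ 0 := hYCne hq
  have hFne : NmuC d μ N (projL d q) ≠ 0 := NmuC_ne hNpos hq.1
  have hYF : YC d μ N q = NmuC d μ N (projL d q)
      - q (Fin.last d) * (starRingEnd ℂ) (q (Fin.last d)) := congrFun YC_eq q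
  -- the column-operation matrix
  set lam : Fin (d+1) → ℂ := Fin.lastCases 0 (fun k' => (starRingEnd ℂ) (q (Fin.last d))
    * wDbar k' (NmuC d μ N) (projL d q) * (NmuC d μ N (projL d q))⁻¹) with hlam
  set E : Matrix (Fin (d+1)) (Fin (d+1)) ℂ :=
    1 + Matrix.of (fun i k => if i = Fin.last d then lam k else 0) with hE
  have hlam_last : lam (Fin.last d) = 0 := by rw [hlam]; exact Fin.lastCases_last ..
  have hlam_cast : ∀ k : Fin d, lam k.castSucc = (starRingEnd ℂ) (q (Fin.last d))
      * wDbar k (NmuC d μ N) (projL d q) * (NmuC d μ N (projL d q))⁻¹ := by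
    intro k; rw [hlam]; exact Fin.lastCases_castSucc ..
  have hdetE : E.det = 1 := by
    have htri : E.BlockTriangular (OrderDual.toDual) := by
      intro i k h
      have hik : i < k := h
      have hine : i ≠ Fin.last d := by
        intro hcon; rw [hcon] at hik; exact absurd hik (not_lt.mpr (Fin.le_last k))
      simp [hE, Matrix.one_apply_ne (ne_of_lt hik), hine]
    rw [Matrix.det_of_lowerTriangular E htri]
    apply Finset.prod_eq_one
    intro i _
    by_cases hi : i = Fin.last d
    · subst hi; simp [hE, hlam_last]
    · simp [hE, hi]
  -- the target block matrix
  set M2 : Matrix (Fin (d+1)) (Fin (d+1)) ℂ :=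
    (Matrix.fromBlocks
      ((NmuC d μ N (projL d q) * (YC d μ N q)⁻¹) • gOmMat d μ N (projL d q))
      (Matrix.of fun j (_ : Fin 1) =>
        -(((YC d μ N q)⁻¹) ^ 2 * q (Fin.last d) * wD j (NmuC d μ N) (projL d q)))
      0
      (Matrix.of fun _ _ => NmuC d μ N (projL d q) * ((YC d μ N q)⁻¹) ^ 2)).submatrix
      (finSumFinEquiv.symm) (finSumFinEquiv.symm) with hM2
  have hprod : gCHmat d μ N q * E = M2 := by
    ext i k
    have hMul : (gCHmat d μ N q * E) i k
        = gCHmat d μ N q i k + gCHmat d μ N q i (Fin.last d) * lam k := by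
      simp only [hE, Matrix.mul_apply, Matrix.add_apply, Matrix.one_apply, Matrix.of_apply,
        mul_add, mul_ite, mul_one, mul_zero, Finset.sum_add_distrib, Finset.sum_ite_eq',
        Finset.mem_univ, if_true]
    rw [hMul]
    have hgm : ∀ a b, gCHmat d μ N q a b = gCH d μ N a b q := fun a b => rfl
    induction k using Fin.lastCases with
    | last =>
      rw [hlam_last, mul_zero, add_zero]
      induction i using Fin.lastCases with
      | last =>
        rw [hgm, gCH_ll hΩ hNsm hNpos hq]
        simp only [hM2, Matrix.submatrix_apply, finSumFinEquiv_symm_last,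
          Matrix.fromBlocks_apply₂₂, Matrix.of_apply]
        rw [hYF]
        have hY' : NmuC d μ N (projL d q)
            - q (Fin.last d) * (starRingEnd ℂ) (q (Fin.last d)) ≠ 0 := hYF ▸ hYne
        field_simp
        ring
      | cast j =>
        rw [hgm, gCH_cl hΩ hNsm hNpos hq]
        simp only [hM2, Matrix.submatrix_apply, finSumFinEquiv_symm_last,
          finSumFinEquiv_symm_castSucc, Matrix.fromBlocks_apply₁₂, Matrix.of_apply]
    | cast k =>
      rw [hlam_cast]
      induction i using Fin.lastCases with
      | last =>
        rw [hgm, hgm, gCH_ll hΩ hNsm hNpos hq, gCH_lc hΩ hNsm hNpos hq]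
        simp only [hM2, Matrix.submatrix_apply, finSumFinEquiv_symm_last,
          finSumFinEquiv_symm_castSucc, Matrix.fromBlocks_apply₂₁, Matrix.zero_apply]
        rw [hYF]
        have hY' : NmuC d μ N (projL d q)
            - q (Fin.last d) * (starRingEnd ℂ) (q (Fin.last d)) ≠ 0 := hYF ▸ hYne
        field_simp
        ring
      | cast j =>
        rw [hgm, hgm, gCH_cc hΩ hNsm hNpos hq, gCH_cl hΩ hNsm hNpos hq]
        simp only [hM2, Matrix.submatrix_apply, finSumFinEquiv_symm_castSucc,
          Matrix.fromBlocks_apply₁₁, Matrix.smul_apply, smul_eq_mul]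
        rw [show gOmMat d μ N (projL d q) j k = gOm d μ N j k (projL d q) from rfl,
          gOm_formula hΩ hNsm hNpos hq.1]
        rw [hYF]
        have hY' : NmuC d μ N (projL d q)
            - q (Fin.last d) * (starRingEnd ℂ) (q (Fin.last d)) ≠ 0 := hYF ▸ hYne
        field_simp
        ring
  have hdet : (gCHmat d μ N q).det = M2.det := by
    rw [← hprod, Matrix.det_mul, hdetE, mul_one]
  rw [hdet, hM2, Matrix.det_submatrix_equiv_self, Matrix.det_fromBlocks_zero₂₁,
    Matrix.det_smul, Matrix.det_fin_one, hMA (projL d q) hq.1]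
  simp only [Fintype.card_fin, Matrix.of_apply]
  ring
end CHaux
end

noncomputable section
namespace CHaux
variable {d : ℕ} {μ γ : ℝ} {N : (Fin d → ℂ) → ℝ} {Ω : Set (Fin d → ℂ)}

lemma logdet (hΩ : IsOpen Ω) (hNsm : ContDiffOn ℝ (⊤ : ℕ∞) N Ω) (hNpos : ∀ z ∈ Ω, 0 < N z)
    (hMA : ∀ z ∈ Ω, (gOmMat d μ N z).det = ((N z ^ (-γ) : ℝ) : ℂ))
    (hμval : μ = γ / (d + 1 : ℝ))
    {q : Fin (d+1) → ℂ} (hq : q ∈ Udom d μ N Ω) :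
    Complex.log ((gCHmat d μ N q).det) = ((d : ℂ) + 2) * CHpot d μ N q := by
  have hN : 0 < N (projL d q) := hNpos _ hq.1
  have hr : 0 < YR d μ N q := YR_pos hq
  have h1 : (NmuC d μ N (projL d q)) ^ (d+1) * ((N (projL d q) ^ (-γ) : ℝ) : ℂ) = 1 := by
    have h2 : ((N (projL d q) ^ μ) ^ (d+1) * N (projL d q) ^ (-γ) : ℝ) = 1 := by
      rw [← Real.rpow_natCast (N (projL d q) ^ μ) (d+1), ← Real.rpow_mul hN.le,
        ← Real.rpow_add hN]
      have hd1 : ((d : ℝ) + 1) ≠ 0 := by positivity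
      have h3 : μ * ((d+1 : ℕ) : ℝ) + (-γ) = 0 := by
        rw [hμval]; push_cast; field_simp; ring
      rw [h3, Real.rpow_zero]
    rw [show NmuC d μ N (projL d q) = ((N (projL d q) ^ μ : ℝ) : ℂ) from rfl,
      ← Complex.ofReal_pow, ← Complex.ofReal_mul, h2, Complex.ofReal_one]
  have hdet : (gCHmat d μ N q).det = (((YR d μ N q)⁻¹ ^ (d+2) : ℝ) : ℂ) := by
    rw [detM hΩ hNsm hNpos hMA hq]
    calc NmuC d μ N (projL d q) ^ (d+1) * ((YC d μ N q)⁻¹) ^ (d+2)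
        * ((N (projL d q) ^ (-γ) : ℝ) : ℂ)
        = (NmuC d μ N (projL d q) ^ (d+1) * ((N (projL d q) ^ (-γ) : ℝ) : ℂ))
          * ((YC d μ N q)⁻¹) ^ (d+2) := by ring
      _ = ((YC d μ N q)⁻¹) ^ (d+2) := by rw [h1, one_mul]
      _ = (((YR d μ N q)⁻¹ ^ (d+2) : ℝ) : ℂ) := by
          rw [show YC d μ N q = ((YR d μ N q : ℝ) : ℂ) from rfl]
          push_cast
          ring
  rw [hdet, ← Complex.ofReal_log (by positivity : (0:ℝ) ≤ (YR d μ N q)⁻¹ ^ (d+2)),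
    Real.log_pow, Real.log_inv]
  rw [show CHpot d μ N q = -((Real.log (YR d μ N q) : ℝ) : ℂ) from congrFun CHpot_eq q]
  push_cast
  ring

end CHaux
end

open CHaux in
/-- for μ = γ/(d+1) the metric g(μ) is Kähler–Einstein. -/
theorem gCH_KahlerEinstein (d : ℕ) (hd : 1 ≤ d) (γ μ : ℝ) (hγ : 0 < γ) (hμ : 0 < μ)
    (Ω : Set (Fin d → ℂ)) (hΩopen : IsOpen Ω) (hΩconn : IsPreconnected Ω)
    (N : (Fin d → ℂ) → ℝ) (hNsm : ContDiffOn ℝ (⊤ : ℕ∞) N Ω) (hNpos : ∀ z ∈ Ω, 0 < N z)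
    (hMA : ∀ z ∈ Ω, (gOmMat d μ N z).det = ((N z ^ (-γ) : ℝ) : ℂ))
    (hgPD : ∀ z ∈ Ω, ∀ w : ℂ, ‖w‖ ^ 2 < N z ^ μ →
      (gCHmat d μ N (Fin.snoc z w)).PosDef)
    (hμval : μ = γ / (d + 1 : ℝ))
    (z : Fin d → ℂ) (w : ℂ) (hz : z ∈ Ω) (hw : ‖w‖ ^ 2 < N z ^ μ)
    (α β : Fin (d + 1)) :
    RicCH d μ N α β (Fin.snoc z w) = -((d : ℂ) + 2) * gCH d μ N α β (Fin.snoc z w) := by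
  classical
  have hproj : projL d (Fin.snoc z w) = z :=
    funext fun j => (projL_apply _ j).trans (Fin.snoc_castSucc ..)
  have hp : Fin.snoc z w ∈ Udom d μ N Ω := by
    constructor
    · rw [hproj]; exact hz
    · rw [hproj, Fin.snoc_last]; exact hw
  have hUo := Udom_open (μ := μ) hΩopen hNsm hNpos
  have hEq : Set.EqOn (fun q => Complex.log ((gCHmat d μ N q).det))
      (fun q => ((d : ℂ) + 2) * CHpot d μ N q) (Udom d μ N Ω) :=
    fun q hq => logdet hΩopen hNsm hNpos hMA hμval hq
  have hstep1 : Set.EqOn (wDbar β (fun q => Complex.log ((gCHmat d μ N q).det)))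
      (fun q => ((d : ℂ) + 2) * wDbar β (CHpot d μ N) q) (Udom d μ N Ω) := by
    refine fun q hq => ?_
    show wDbar β _ q = ((d : ℂ) + 2) * wDbar β (CHpot d μ N) q
    rw [wDbar_congr β (Filter.eventuallyEq_of_mem (hUo.mem_nhds hq) hEq)]
    exact wDbar_const_mul β (diffAt (hCHpotsm hΩopen hNsm hNpos) hUo hq) _
  show -(wD α (wDbar β fun q => Complex.log ((gCHmat d μ N q).det)) (Fin.snoc z w)) = _
  rw [wD_congr α (Filter.eventuallyEq_of_mem (hUo.mem_nhds hp) hstep1)]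
  rw [wD_const_mul α (diffAt (contDiffOn_wDbar β hUo (hCHpotsm hΩopen hNsm hNpos)) hUo hp) _]
  show -(((d : ℂ) + 2) * gCH d μ N α β (Fin.snoc z w)) = _
  ring
end Proj
end
end

section
/- At every point (0,w) of the Cartan–Hartogs domain M_Ω(μ) (so |w| < 1): the (d+1,d+1) entry of the inverse metric satisfies [g(μ)^{ww̄}]_{z=0} = (1 − |w|²)², and for all 1 ≤ j,k ≤ d one has [g(μ)^{jk̄}]_{z=0} = (1 − |w|²) · [g^{jk̄}_{Ω(μ)}]_{z=0}. -/
open Complex Matrix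
open scoped ComplexOrder

section Toolkit
variable {n : ℕ} {f g : (Fin n → ℂ) → ℂ} {p : Fin n → ℂ} {j : Fin n}

lemma wD_of_hasFDerivAt {L : (Fin n → ℂ) →L[ℝ] ℂ} (h : HasFDerivAt f L p) :
    wD j f p = (1/2 : ℂ) * (L (Pi.single j 1) - Complex.I * L (Pi.single j Complex.I)) := by
  simp only [wD, h.fderiv]

lemma wDbar_of_hasFDerivAt {L : (Fin n → ℂ) →L[ℝ] ℂ} (h : HasFDerivAt f L p) :
    wDbar j f p = (1/2 : ℂ) * (L (Pi.single j 1) + Complex.I * L (Pi.single j Complex.I)) := by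
  simp only [wDbar, h.fderiv]

lemma wD_congr (h : f =ᶠ[nhds p] g) : wD j f p = wD j g p := by
  simp only [wD, h.fderiv_eq]

lemma wDbar_congr (h : f =ᶠ[nhds p] g) : wDbar j f p = wDbar j g p := by
  simp only [wDbar, h.fderiv_eq]

lemma wD_comp {φ : ℂ → ℂ} {c : ℂ} (hφ : HasDerivAt φ c (g p)) (hg : DifferentiableAt ℝ g p) :
    wD j (fun q => φ (g q)) p = c * wD j g p := by
  have h1 : HasFDerivAt (fun q => φ (g q))
      ((ContinuousLinearMap.restrictScalars ℝ
        ((1 : ℂ →L[ℂ] ℂ).smulRight c)).comp (fderiv ℝ g p)) p :=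
    (hφ.hasFDerivAt.restrictScalars ℝ).comp p hg.hasFDerivAt
  rw [wD_of_hasFDerivAt h1]
  simp only [wD, ContinuousLinearMap.coe_comp', Function.comp_apply,
    ContinuousLinearMap.coe_restrictScalars', ContinuousLinearMap.smulRight_apply,
    ContinuousLinearMap.one_apply, smul_eq_mul]
  ring

lemma wDbar_comp {φ : ℂ → ℂ} {c : ℂ} (hφ : HasDerivAt φ c (g p)) (hg : DifferentiableAt ℝ g p) :
    wDbar j (fun q => φ (g q)) p = c * wDbar j g p := by
  have h1 : HasFDerivAt (fun q => φ (g q))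
      ((ContinuousLinearMap.restrictScalars ℝ
        ((1 : ℂ →L[ℂ] ℂ).smulRight c)).comp (fderiv ℝ g p)) p :=
    (hφ.hasFDerivAt.restrictScalars ℝ).comp p hg.hasFDerivAt
  rw [wDbar_of_hasFDerivAt h1]
  simp only [wDbar, ContinuousLinearMap.coe_comp', Function.comp_apply,
    ContinuousLinearMap.coe_restrictScalars', ContinuousLinearMap.smulRight_apply,
    ContinuousLinearMap.one_apply, smul_eq_mul]
  ring

lemma wD_mul (hf : DifferentiableAt ℝ f p) (hg : DifferentiableAt ℝ g p) :
    wD j (fun q => f q * g q) p = wD j f p * g p + f p * wD j g p := by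
  have h1 := hf.hasFDerivAt.mul hg.hasFDerivAt
  rw [wD_of_hasFDerivAt (f := fun q => f q * g q) h1]
  simp only [wD, ContinuousLinearMap.add_apply, ContinuousLinearMap.coe_smul',
    Pi.smul_apply, smul_eq_mul]
  ring
end Toolkit

section SmoothAux
variable {d : ℕ} {μ : ℝ} {N : (Fin d → ℂ) → ℝ} {Ω : Set (Fin d → ℂ)}

lemma NmuC_contDiffAt (hΩopen : IsOpen Ω) (hNsm : ContDiffOn ℝ (⊤ : ℕ∞) N Ω)
    (hNpos : ∀ z ∈ Ω, 0 < N z) {z : Fin d → ℂ} (hz : z ∈ Ω) :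
    ContDiffAt ℝ (⊤ : ℕ∞) (NmuC d μ N) z := by
  have h1 : ContDiffAt ℝ (⊤ : ℕ∞) N z := hNsm.contDiffAt (hΩopen.mem_nhds hz)
  have h2 : ContDiffAt ℝ (⊤ : ℕ∞) (fun y => N y ^ μ) z := h1.rpow_const_of_ne (hNpos z hz).ne'
  exact Complex.ofRealCLM.contDiff.contDiffAt.comp z h2

lemma wDbar_NmuC_diff (hΩopen : IsOpen Ω) (hNsm : ContDiffOn ℝ (⊤ : ℕ∞) N Ω)
    (hNpos : ∀ z ∈ Ω, 0 < N z) (h0 : (0 : Fin d → ℂ) ∈ Ω) (k : Fin d) :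
    DifferentiableAt ℝ (wDbar k (NmuC d μ N)) 0 := by
  have h1 : ContDiffAt ℝ 1 (fderiv ℝ (NmuC d μ N)) 0 :=
    (NmuC_contDiffAt hΩopen hNsm hNpos h0).fderiv_right (WithTop.coe_le_coe.2 (le_top : ((1+1:ℕ):ℕ∞) ≤ ⊤))
  have h2 : ∀ v : Fin d → ℂ, DifferentiableAt ℝ (fun z => fderiv ℝ (NmuC d μ N) z v) 0 :=
    fun v => (ContinuousLinearMap.apply ℝ ℂ v).differentiableAt.comp 0
      (h1.differentiableAt one_ne_zero)
  exact DifferentiableAt.const_mul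
    (DifferentiableAt.add (h2 _) (DifferentiableAt.const_mul (h2 _) Complex.I)) _
end SmoothAux

noncomputable section Hsec
variable {d : ℕ} {μ : ℝ} {N : (Fin d → ℂ) → ℝ} {Ω : Set (Fin d → ℂ)}

def piL (d : ℕ) : ((Fin (d+1) → ℂ)) →L[ℝ] (Fin d → ℂ) :=
  ContinuousLinearMap.pi fun j => ContinuousLinearMap.proj j.castSucc

lemma piL_apply (p : Fin (d+1) → ℂ) : piL d p = fun j => p j.castSucc := rfl

lemma piL_single_castSucc (j : Fin d) (c : ℂ) :
    piL d (Pi.single j.castSucc c) = Pi.single j c := by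
  funext i
  simp only [piL_apply, Pi.single_apply, Fin.castSucc_inj]

lemma piL_single_last (c : ℂ) : piL d (Pi.single (Fin.last d) c) = 0 := by
  funext i
  simp only [piL_apply]
  rw [Pi.single_apply, if_neg (Fin.castSucc_lt_last i).ne]
  rfl

/-- The complexified defining function of the Cartan-Hartogs domain. -/
def Hfun (d : ℕ) (μ : ℝ) (N : (Fin d → ℂ) → ℝ) : (Fin (d+1) → ℂ) → ℂ :=
  fun p => NmuC d μ N (piL d p) - p (Fin.last d) * (starRingEnd ℂ) (p (Fin.last d))

lemma Hfun_eq (p : Fin (d+1) → ℂ) :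
    Hfun d μ N p = ((N (fun j => p j.castSucc) ^ μ - ‖p (Fin.last d)‖ ^ 2 : ℝ) : ℂ) := by
  simp only [Hfun, NmuC, piL_apply, Complex.ofReal_sub, Complex.ofReal_pow]
  rw [Complex.mul_conj]
  rw [Complex.normSq_eq_norm_sq]
  push_cast
  ring

/-- `conj` as an `ℝ`-linear CLM. -/
def conjL : ℂ →L[ℝ] ℂ := Complex.conjCLE.toContinuousLinearMap

@[simp] lemma conjL_apply (z : ℂ) : conjL z = (starRingEnd ℂ) z := rfl

def DB (p : Fin (d+1) → ℂ) : (Fin (d+1) → ℂ) →L[ℝ] ℂ :=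
  p (Fin.last d) • (conjL.comp (ContinuousLinearMap.proj (Fin.last d))) +
    (starRingEnd ℂ) (p (Fin.last d)) • (ContinuousLinearMap.proj (Fin.last d) :
      (Fin (d+1) → ℂ) →L[ℝ] ℂ)

lemma hasFDerivAt_B (p : Fin (d+1) → ℂ) :
    HasFDerivAt (fun q : Fin (d+1) → ℂ => q (Fin.last d) * (starRingEnd ℂ) (q (Fin.last d)))
      (DB p) p := by
  have h1 := (ContinuousLinearMap.proj (R := ℝ) (φ := fun _ : Fin (d+1) => ℂ)
      (Fin.last d)).hasFDerivAt (x := p)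
  have h2 := (conjL.hasFDerivAt).comp p h1
  exact h1.mul h2

def DH (d : ℕ) (μ : ℝ) (N : (Fin d → ℂ) → ℝ) (p : Fin (d+1) → ℂ) : (Fin (d+1) → ℂ) →L[ℝ] ℂ :=
  (fderiv ℝ (NmuC d μ N) (piL d p)).comp (piL d) - DB p

lemma hasFDerivAt_H (hd : DifferentiableAt ℝ (NmuC d μ N) (piL d p)) :
    HasFDerivAt (Hfun d μ N) (DH d μ N p) p := by
  exact (hd.hasFDerivAt.comp p (piL d).hasFDerivAt).sub (hasFDerivAt_B p)
end Hsec

section Hvals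
variable {d : ℕ} {μ : ℝ} {N : (Fin d → ℂ) → ℝ} {p : Fin (d+1) → ℂ}

lemma DH_single_castSucc (k : Fin d) (x : ℂ) :
    DH d μ N p (Pi.single k.castSucc x) = fderiv ℝ (NmuC d μ N) (piL d p) (Pi.single k x) := by
  have hne : (Fin.last d) ≠ k.castSucc := ((Fin.castSucc_lt_last k).ne).symm
  simp only [DH, DB, ContinuousLinearMap.sub_apply, ContinuousLinearMap.coe_comp',
    Function.comp_apply, piL_single_castSucc, ContinuousLinearMap.add_apply,
    ContinuousLinearMap.coe_smul', Pi.smul_apply, ContinuousLinearMap.proj_apply,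
    Pi.single_eq_of_ne hne, map_zero, smul_zero, conjL_apply, add_zero, sub_zero, mul_zero,
    smul_eq_mul]

lemma DH_single_last (x : ℂ) :
    DH d μ N p (Pi.single (Fin.last d) x) =
      -(p (Fin.last d) * (starRingEnd ℂ) x + (starRingEnd ℂ) (p (Fin.last d)) * x) := by
  simp only [DH, DB, ContinuousLinearMap.sub_apply, ContinuousLinearMap.coe_comp',
    Function.comp_apply, piL_single_last, map_zero, ContinuousLinearMap.add_apply,
    ContinuousLinearMap.coe_smul', Pi.smul_apply, ContinuousLinearMap.proj_apply,
    Pi.single_eq_same, conjL_apply, smul_eq_mul]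
  ring

variable (hd : DifferentiableAt ℝ (NmuC d μ N) (piL d p))
include hd

lemma wDbar_H_castSucc (k : Fin d) :
    wDbar k.castSucc (Hfun d μ N) p = wDbar k (NmuC d μ N) (piL d p) := by
  rw [wDbar_of_hasFDerivAt (hasFDerivAt_H hd), DH_single_castSucc, DH_single_castSucc]
  rfl

lemma wD_H_castSucc (k : Fin d) :
    wD k.castSucc (Hfun d μ N) p = wD k (NmuC d μ N) (piL d p) := by
  rw [wD_of_hasFDerivAt (hasFDerivAt_H hd), DH_single_castSucc, DH_single_castSucc]
  rfl

lemma wDbar_H_last : wDbar (Fin.last d) (Hfun d μ N) p = -(p (Fin.last d)) := by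
  rw [wDbar_of_hasFDerivAt (hasFDerivAt_H hd), DH_single_last, DH_single_last]
  simp only [_root_.map_one, Complex.conj_I]
  ring_nf
  simp only [Complex.I_sq]
  ring

lemma wD_H_last : wD (Fin.last d) (Hfun d μ N) p = -((starRingEnd ℂ) (p (Fin.last d))) := by
  rw [wD_of_hasFDerivAt (hasFDerivAt_H hd), DH_single_last, DH_single_last]
  simp only [_root_.map_one, Complex.conj_I]
  ring_nf
  simp only [Complex.I_sq]
  ring
end Hvals

noncomputable section GomSec
variable {d : ℕ} {μ : ℝ} {N : (Fin d → ℂ) → ℝ} {Ω : Set (Fin d → ℂ)}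

lemma gOm_zero (hΩopen : IsOpen Ω) (hNsm : ContDiffOn ℝ (⊤ : ℕ∞) N Ω)
    (hNpos : ∀ z ∈ Ω, 0 < N z) (h0 : (0 : Fin d → ℂ) ∈ Ω) (hN0 : N 0 = 1)
    (j k : Fin d) (hA1 : wDbar k (NmuC d μ N) 0 = 0) :
    gOm d μ N j k 0 = -(wD j (wDbar k (NmuC d μ N)) 0) := by
  have hNmu0 : NmuC d μ N 0 = 1 := by simp [NmuC, hN0]
  have hNd0 : DifferentiableAt ℝ (NmuC d μ N) 0 :=
    (NmuC_contDiffAt hΩopen hNsm hNpos h0).differentiableAt (by simp)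
  have hstep : ∀ y ∈ Ω, wDbar k (fun y => ((Real.log (N y ^ μ) : ℝ) : ℂ)) y =
      (NmuC d μ N y)⁻¹ * wDbar k (NmuC d μ N) y := by
    intro y hy
    have hval : ∀ x ∈ Ω, ((Real.log (N x ^ μ) : ℝ) : ℂ) = Complex.log (NmuC d μ N x) := by
      intro x hx
      simp only [NmuC]
      rw [Complex.ofReal_log (Real.rpow_nonneg (hNpos x hx).le μ)]
    have hev : (fun y => ((Real.log (N y ^ μ) : ℝ) : ℂ)) =ᶠ[nhds y]
        (fun x => Complex.log (NmuC d μ N x)) :=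
      Filter.eventuallyEq_of_mem (hΩopen.mem_nhds hy) hval
    have hslit : NmuC d μ N y ∈ Complex.slitPlane := by
      simp only [NmuC]
      exact Complex.ofReal_mem_slitPlane.2 (Real.rpow_pos_of_pos (hNpos y hy) μ)
    calc wDbar k (fun y => ((Real.log (N y ^ μ) : ℝ) : ℂ)) y
        = wDbar k (fun x => Complex.log (NmuC d μ N x)) y := wDbar_congr hev
      _ = (NmuC d μ N y)⁻¹ * wDbar k (NmuC d μ N) y :=
          wDbar_comp (Complex.hasDerivAt_log hslit)
            ((NmuC_contDiffAt hΩopen hNsm hNpos hy).differentiableAt (by simp))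
  have hev2 : (wDbar k (fun y => ((Real.log (N y ^ μ) : ℝ) : ℂ))) =ᶠ[nhds 0]
      (fun y => (NmuC d μ N y)⁻¹ * wDbar k (NmuC d μ N) y) :=
    Filter.eventuallyEq_of_mem (hΩopen.mem_nhds h0) hstep
  have hne : NmuC d μ N 0 ≠ 0 := by rw [hNmu0]; exact one_ne_zero
  have hf1diff : DifferentiableAt ℝ (fun y => (NmuC d μ N y)⁻¹) 0 :=
    (((hasDerivAt_inv hne).hasFDerivAt.restrictScalars ℝ).comp 0
      hNd0.hasFDerivAt).differentiableAt
  have hf2diff : DifferentiableAt ℝ (wDbar k (NmuC d μ N)) 0 :=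
    wDbar_NmuC_diff hΩopen hNsm hNpos h0 k
  have key : wD j (wDbar k fun y => ((Real.log (N y ^ μ) : ℝ) : ℂ)) 0 =
      wD j (wDbar k (NmuC d μ N)) 0 := by
    calc wD j (wDbar k fun y => ((Real.log (N y ^ μ) : ℝ) : ℂ)) 0
        = wD j (fun y => (NmuC d μ N y)⁻¹ * wDbar k (NmuC d μ N) y) 0 := wD_congr hev2
      _ = wD j (fun y => (NmuC d μ N y)⁻¹) 0 * wDbar k (NmuC d μ N) 0 +
            (NmuC d μ N 0)⁻¹ * wD j (wDbar k (NmuC d μ N)) 0 := wD_mul hf1diff hf2diff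
      _ = wD j (wDbar k (NmuC d μ N)) 0 := by rw [hA1, hNmu0]; simp
  rw [gOm, key]

noncomputable section MainSec
variable {d : ℕ} {μ : ℝ} {N : (Fin d → ℂ) → ℝ} {Ω : Set (Fin d → ℂ)}

lemma gCH_entries (hΩopen : IsOpen Ω) (hNsm : ContDiffOn ℝ (⊤ : ℕ∞) N Ω)
    (hNpos : ∀ z ∈ Ω, 0 < N z) (h0 : (0 : Fin d → ℂ) ∈ Ω) (hN0 : N 0 = 1) (hμ : 0 < μ)
    (hHol1 : ∀ j : Fin d, wD j (NmuC d μ N) 0 = 0)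
    (hAhol1 : ∀ k : Fin d, wDbar k (NmuC d μ N) 0 = 0)
    (w : ℂ) (hw : ‖w‖ < 1) :
    (∀ j k : Fin d, gCH d μ N j.castSucc k.castSucc (Fin.snoc 0 w) =
      (((1 - ‖w‖ ^ 2 : ℝ) : ℂ))⁻¹ * gOm d μ N j k 0) ∧
    (∀ j : Fin d, gCH d μ N j.castSucc (Fin.last d) (Fin.snoc 0 w) = 0) ∧
    (∀ k : Fin d, gCH d μ N (Fin.last d) k.castSucc (Fin.snoc 0 w) = 0) ∧
    gCH d μ N (Fin.last d) (Fin.last d) (Fin.snoc 0 w) =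
      ((((1 - ‖w‖ ^ 2 : ℝ) : ℂ)) ^ 2)⁻¹ := by
  set p₀ : Fin (d+1) → ℂ := Fin.snoc 0 w with hp₀def
  have hπ0 : piL d p₀ = 0 := by
    funext i
    simp only [piL_apply, hp₀def, Fin.snoc_castSucc]
  have hlast : p₀ (Fin.last d) = w := Fin.snoc_last _ _
  set c0 : ℝ := 1 - ‖w‖ ^ 2 with hc0def
  have hc0 : 0 < c0 := by
    have : ‖w‖ ^ 2 < 1 := by
      calc ‖w‖ ^ 2 ≤ ‖w‖ := by
            nlinarith [norm_nonneg w]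
        _ < 1 := hw
    simpa [hc0def] using this
  -- the open set U
  set U : Set (Fin (d+1) → ℂ) := (piL d ⁻¹' Ω) ∩
    ((fun p => N (fun j => p j.castSucc) ^ μ - ‖p (Fin.last d)‖ ^ 2) ⁻¹'
      Set.Ioi (0:ℝ)) with hUdef
  have hVopen : IsOpen (piL d ⁻¹' Ω) := hΩopen.preimage (piL d).continuous
  have hcontN : ContinuousOn (fun p : Fin (d+1) → ℂ => N (fun j => p j.castSucc))
      (piL d ⁻¹' Ω) := by
    have : ContinuousOn (N ∘ piL d) (piL d ⁻¹' Ω) :=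
      hNsm.continuousOn.comp (piL d).continuous.continuousOn (fun p hp => hp)
    exact this
  have hcont : ContinuousOn
      (fun p : Fin (d+1) → ℂ =>
        N (fun j => p j.castSucc) ^ μ - ‖p (Fin.last d)‖ ^ 2) (piL d ⁻¹' Ω) := by
    apply ContinuousOn.sub
    · exact hcontN.rpow_const (fun p hp => Or.inr hμ.le)
    · exact (((continuous_norm.comp (continuous_apply (Fin.last d))).pow 2)).continuousOn
  have hUopen : IsOpen U := hcont.isOpen_inter_preimage hVopen isOpen_Ioi
  have h00 : (fun j => p₀ j.castSucc) = (0 : Fin d → ℂ) := by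
    funext j
    simp only [hp₀def, Fin.snoc_castSucc]
  have hp₀U : p₀ ∈ U := by
    constructor
    · show piL d p₀ ∈ Ω
      rw [hπ0]; exact h0
    · show N (fun j => p₀ j.castSucc) ^ μ - ‖p₀ (Fin.last d)‖ ^ 2 ∈ Set.Ioi (0:ℝ)
      rw [h00, hlast, hN0, Real.one_rpow]
      exact hc0
  -- differentiability of NmuC along U
  have hNdU : ∀ q ∈ U, DifferentiableAt ℝ (NmuC d μ N) (piL d q) := fun q hq =>
    (NmuC_contDiffAt hΩopen hNsm hNpos hq.1).differentiableAt (by simp)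
  have hHdiff : ∀ q ∈ U, DifferentiableAt ℝ (Hfun d μ N) q := fun q hq =>
    (hasFDerivAt_H (hNdU q hq)).differentiableAt
  -- potential identification on U
  have hpot : ∀ q ∈ U, CHpot d μ N q = -Complex.log (Hfun d μ N q) := by
    intro q hq
    have hXpos : (0:ℝ) < N (fun j => q j.castSucc) ^ μ - ‖q (Fin.last d)‖ ^ 2 := hq.2
    simp only [CHpot]
    rw [Complex.ofReal_log hXpos.le, Hfun_eq]
  have hHslit : ∀ q ∈ U, Hfun d μ N q ∈ Complex.slitPlane := by
    intro q hq
    rw [Hfun_eq]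
    exact Complex.ofReal_mem_slitPlane.2 hq.2
  -- first conjugate derivative of the potential on U
  have hwbar : ∀ β : Fin (d+1), ∀ q ∈ U, wDbar β (CHpot d μ N) q =
      -(Hfun d μ N q)⁻¹ * wDbar β (Hfun d μ N) q := by
    intro β q hq
    have hev : CHpot d μ N =ᶠ[nhds q] fun p => -Complex.log (Hfun d μ N p) :=
      Filter.eventuallyEq_of_mem (hUopen.mem_nhds hq) hpot
    have hcomp := wDbar_comp (j := β) (φ := fun z => -Complex.log z) (g := Hfun d μ N)
      ((Complex.hasDerivAt_log (hHslit q hq)).neg) (hHdiff q hq)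
    calc wDbar β (CHpot d μ N) q = wDbar β (fun p => -Complex.log (Hfun d μ N p)) q :=
          wDbar_congr hev
      _ = -(Hfun d μ N q)⁻¹ * wDbar β (Hfun d μ N) q := hcomp
  -- values at p₀
  have Hp0 : Hfun d μ N p₀ = ((c0 : ℝ) : ℂ) := by
    rw [Hfun_eq, h00, hlast, hN0, Real.one_rpow]
  have Hp0ne : Hfun d μ N p₀ ≠ 0 := by
    rw [Hp0]
    exact_mod_cast hc0.ne'
  have hc0ne : ((c0 : ℝ) : ℂ) ≠ 0 := by exact_mod_cast hc0.ne'
  -- the factor f₁ = -(Hfun)⁻¹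
  have hderinv : HasDerivAt (fun z : ℂ => -(z⁻¹)) (((Hfun d μ N p₀) ^ 2)⁻¹) (Hfun d μ N p₀) := by
    have h := (hasDerivAt_inv Hp0ne).neg
    rw [neg_neg] at h
    exact h
  have hf₁diff : DifferentiableAt ℝ (fun q => -(Hfun d μ N q)⁻¹) p₀ :=
    ((hderinv.hasFDerivAt.restrictScalars ℝ).comp p₀
      (hHdiff p₀ hp₀U).hasFDerivAt).differentiableAt
  have hwD_f₁ : ∀ α : Fin (d+1), wD α (fun q => -(Hfun d μ N q)⁻¹) p₀ =
      ((Hfun d μ N p₀) ^ 2)⁻¹ * wD α (Hfun d μ N) p₀ := fun α =>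
    wD_comp (j := α) (φ := fun z : ℂ => -(z⁻¹)) (g := Hfun d μ N) hderinv (hHdiff p₀ hp₀U)
  -- wD of Hfun at p₀
  have hwDH_cs : ∀ j : Fin d, wD j.castSucc (Hfun d μ N) p₀ = 0 := by
    intro j
    rw [wD_H_castSucc (hNdU p₀ hp₀U), hπ0]
    exact hHol1 j
  have hwDH_last : wD (Fin.last d) (Hfun d μ N) p₀ = -((starRingEnd ℂ) w) := by
    rw [wD_H_last (hNdU p₀ hp₀U), hlast]
  -- the factor f₂ = (wDbar k NmuC) ∘ piL
  have hdw : ∀ k : Fin d, DifferentiableAt ℝ (wDbar k (NmuC d μ N)) (piL d p₀) := by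
    intro k
    rw [hπ0]
    exact wDbar_NmuC_diff hΩopen hNsm hNpos h0 k
  have hf₂der : ∀ k : Fin d, HasFDerivAt (fun q => wDbar k (NmuC d μ N) (piL d q))
      ((fderiv ℝ (wDbar k (NmuC d μ N)) (piL d p₀)).comp (piL d)) p₀ := fun k =>
    ((hdw k).hasFDerivAt).comp p₀ (piL d).hasFDerivAt
  have hf₂p₀ : ∀ k : Fin d, wDbar k (NmuC d μ N) (piL d p₀) = 0 := by
    intro k
    rw [hπ0]
    exact hAhol1 k
  have hwD_f₂_cs : ∀ j k : Fin d, wD j.castSucc (fun q => wDbar k (NmuC d μ N) (piL d q)) p₀ =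
      wD j (wDbar k (NmuC d μ N)) 0 := by
    intro j k
    rw [wD_of_hasFDerivAt (hf₂der k)]
    simp only [ContinuousLinearMap.coe_comp', Function.comp_apply, piL_single_castSucc]
    rw [hπ0]
    rfl
  have hwD_f₂_last : ∀ k : Fin d, wD (Fin.last d)
      (fun q => wDbar k (NmuC d μ N) (piL d q)) p₀ = 0 := by
    intro k
    rw [wD_of_hasFDerivAt (hf₂der k)]
    simp only [ContinuousLinearMap.coe_comp', Function.comp_apply, piL_single_last, map_zero]
    ring
  -- the factor f₃ = fun q => -(q last)
  have hf₃der : HasFDerivAt (fun q : Fin (d+1) → ℂ => -(q (Fin.last d)))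
      (-(ContinuousLinearMap.proj (R := ℝ) (φ := fun _ : Fin (d+1) => ℂ) (Fin.last d))) p₀ := by
    exact ((ContinuousLinearMap.proj (R := ℝ) (φ := fun _ : Fin (d+1) => ℂ)
      (Fin.last d)).hasFDerivAt (x := p₀)).neg
  have hwD_f₃_cs : ∀ j : Fin d, wD j.castSucc (fun q : Fin (d+1) → ℂ => -(q (Fin.last d))) p₀ = 0 := by
    intro j
    rw [wD_of_hasFDerivAt hf₃der]
    have hne : (Fin.last d) ≠ j.castSucc := ((Fin.castSucc_lt_last j).ne).symm
    simp only [ContinuousLinearMap.neg_apply, ContinuousLinearMap.proj_apply,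
      Pi.single_eq_of_ne hne]
    ring
  have hwD_f₃_last : wD (Fin.last d) (fun q : Fin (d+1) → ℂ => -(q (Fin.last d))) p₀ = -1 := by
    rw [wD_of_hasFDerivAt hf₃der]
    simp only [ContinuousLinearMap.neg_apply, ContinuousLinearMap.proj_apply, Pi.single_eq_same]
    ring_nf
    simp only [Complex.I_sq]
    ring
  -- eventual equalities for the two conjugate derivatives
  have hGk : ∀ k : Fin d, (wDbar k.castSucc (CHpot d μ N)) =ᶠ[nhds p₀]
      (fun q => -(Hfun d μ N q)⁻¹ * wDbar k (NmuC d μ N) (piL d q)) := by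
    intro k
    refine Filter.eventuallyEq_of_mem (hUopen.mem_nhds hp₀U) (fun q hq => ?_)
    rw [hwbar k.castSucc q hq, wDbar_H_castSucc (hNdU q hq)]
  have hGl : (wDbar (Fin.last d) (CHpot d μ N)) =ᶠ[nhds p₀]
      (fun q => -(Hfun d μ N q)⁻¹ * -(q (Fin.last d))) := by
    refine Filter.eventuallyEq_of_mem (hUopen.mem_nhds hp₀U) (fun q hq => ?_)
    rw [hwbar (Fin.last d) q hq, wDbar_H_last (hNdU q hq)]
  refine ⟨?_, ?_, ?_, ?_⟩
  · intro j k
    have hmul := wD_mul (j := j.castSucc) (f := fun q => -(Hfun d μ N q)⁻¹)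
      (g := fun q => wDbar k (NmuC d μ N) (piL d q)) hf₁diff (hf₂der k).differentiableAt
    calc gCH d μ N j.castSucc k.castSucc p₀
        = wD j.castSucc (fun q => -(Hfun d μ N q)⁻¹ * wDbar k (NmuC d μ N) (piL d q)) p₀ :=
          wD_congr (hGk k)
      _ = wD j.castSucc (fun q => -(Hfun d μ N q)⁻¹) p₀ * wDbar k (NmuC d μ N) (piL d p₀) +
            -(Hfun d μ N p₀)⁻¹ * wD j.castSucc (fun q => wDbar k (NmuC d μ N) (piL d q)) p₀ :=
          hmul
      _ = -(Hfun d μ N p₀)⁻¹ * wD j (wDbar k (NmuC d μ N)) 0 := by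
          rw [hf₂p₀ k, hwD_f₂_cs j k]
          ring
      _ = (((1 - ‖w‖ ^ 2 : ℝ) : ℂ))⁻¹ * gOm d μ N j k 0 := by
          rw [Hp0, gOm_zero hΩopen hNsm hNpos h0 hN0 j k (hAhol1 k)]
          ring
  · intro j
    have hmul := wD_mul (j := j.castSucc) (f := fun q => -(Hfun d μ N q)⁻¹)
      (g := fun q : Fin (d+1) → ℂ => -(q (Fin.last d))) hf₁diff hf₃der.differentiableAt
    calc gCH d μ N j.castSucc (Fin.last d) p₀
        = wD j.castSucc (fun q => -(Hfun d μ N q)⁻¹ * -(q (Fin.last d))) p₀ := wD_congr hGl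
      _ = wD j.castSucc (fun q => -(Hfun d μ N q)⁻¹) p₀ * -(p₀ (Fin.last d)) +
            -(Hfun d μ N p₀)⁻¹ * wD j.castSucc (fun q : Fin (d+1) → ℂ => -(q (Fin.last d))) p₀ :=
          hmul
      _ = 0 := by
          rw [hwD_f₁ j.castSucc, hwDH_cs j, hwD_f₃_cs j]
          ring
  · intro k
    have hmul := wD_mul (j := Fin.last d) (f := fun q => -(Hfun d μ N q)⁻¹)
      (g := fun q => wDbar k (NmuC d μ N) (piL d q)) hf₁diff (hf₂der k).differentiableAt
    calc gCH d μ N (Fin.last d) k.castSucc p₀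
        = wD (Fin.last d) (fun q => -(Hfun d μ N q)⁻¹ * wDbar k (NmuC d μ N) (piL d q)) p₀ :=
          wD_congr (hGk k)
      _ = wD (Fin.last d) (fun q => -(Hfun d μ N q)⁻¹) p₀ * wDbar k (NmuC d μ N) (piL d p₀) +
            -(Hfun d μ N p₀)⁻¹ * wD (Fin.last d) (fun q => wDbar k (NmuC d μ N) (piL d q)) p₀ :=
          hmul
      _ = 0 := by
          rw [hf₂p₀ k, hwD_f₂_last k]
          ring
  · have hmul := wD_mul (j := Fin.last d) (f := fun q => -(Hfun d μ N q)⁻¹)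
      (g := fun q : Fin (d+1) → ℂ => -(q (Fin.last d))) hf₁diff hf₃der.differentiableAt
    have habs : (starRingEnd ℂ) w * w = ((‖w‖ ^ 2 : ℝ) : ℂ) := by
      calc (starRingEnd ℂ) w * w = w * (starRingEnd ℂ) w := mul_comm _ _
        _ = ((Complex.normSq w : ℝ) : ℂ) := Complex.mul_conj w
        _ = ((‖w‖ ^ 2 : ℝ) : ℂ) := by rw [Complex.normSq_eq_norm_sq]
    calc gCH d μ N (Fin.last d) (Fin.last d) p₀
        = wD (Fin.last d) (fun q => -(Hfun d μ N q)⁻¹ * -(q (Fin.last d))) p₀ := wD_congr hGl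
      _ = wD (Fin.last d) (fun q => -(Hfun d μ N q)⁻¹) p₀ * -(p₀ (Fin.last d)) +
            -(Hfun d μ N p₀)⁻¹ * wD (Fin.last d) (fun q : Fin (d+1) → ℂ => -(q (Fin.last d))) p₀ :=
          hmul
      _ = (((c0 : ℝ) : ℂ) ^ 2)⁻¹ * ((starRingEnd ℂ) w * w) + (((c0 : ℝ) : ℂ))⁻¹ := by
          rw [hwD_f₁ (Fin.last d), hwDH_last, hwD_f₃_last, hlast, Hp0]
          ring
      _ = ((((1 - ‖w‖ ^ 2 : ℝ) : ℂ)) ^ 2)⁻¹ := by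
          rw [habs]
          have h1 : ((‖w‖ ^ 2 : ℝ) : ℂ) = 1 - ((c0 : ℝ) : ℂ) := by
            rw [hc0def]; push_cast; ring
          have h2 : (((1 - ‖w‖ ^ 2 : ℝ) : ℂ)) = ((c0 : ℝ) : ℂ) := by rw [hc0def]
          rw [h1, h2]
          field_simp
          ring
end MainSec

/-- entries of the inverse metric matrix at points (0,w). -/
theorem inv_gCH_at_zero (d : ℕ) (hd : 1 ≤ d) (γ μ : ℝ) (hγ : 0 < γ) (hμ : 0 < μ)
    (Ω : Set (Fin d → ℂ)) (hΩopen : IsOpen Ω) (hΩconn : IsPreconnected Ω)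
    (N : (Fin d → ℂ) → ℝ) (hNsm : ContDiffOn ℝ (⊤ : ℕ∞) N Ω) (hNpos : ∀ z ∈ Ω, 0 < N z)
    (h0 : (0 : Fin d → ℂ) ∈ Ω) (hN0 : N 0 = 1)
    (hHol : ∀ L : List (Fin d), L ≠ [] → L.foldr (fun j f => wD j f) (NmuC d μ N) 0 = 0)
    (hAhol : ∀ L : List (Fin d), L ≠ [] → L.foldr (fun j f => wDbar j f) (NmuC d μ N) 0 = 0)
    (hgOmPD : ∀ z ∈ Ω, (gOmMat d μ N z).PosDef)
    (hgPD : ∀ z ∈ Ω, ∀ w : ℂ, ‖w‖ ^ 2 < N z ^ μ →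
      (gCHmat d μ N (Fin.snoc z w)).PosDef)
    (w : ℂ) (hw : ‖w‖ < 1) :
    (gCHmat d μ N (Fin.snoc (0 : Fin d → ℂ) w))⁻¹ (Fin.last d) (Fin.last d) =
        (((1 - ‖w‖ ^ 2) ^ 2 : ℝ) : ℂ) ∧
      ∀ j k : Fin d,
        (gCHmat d μ N (Fin.snoc (0 : Fin d → ℂ) w))⁻¹ j.castSucc k.castSucc =
          ((1 - ‖w‖ ^ 2 : ℝ) : ℂ) * (gOmMat d μ N 0)⁻¹ j k := by
  classical
  have hHol1 : ∀ j : Fin d, wD j (NmuC d μ N) 0 = 0 :=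
    fun j => hHol [j] (List.cons_ne_nil j [])
  have hAhol1 : ∀ k : Fin d, wDbar k (NmuC d μ N) 0 = 0 :=
    fun k => hAhol [k] (List.cons_ne_nil k [])
  obtain ⟨hjk, hjl, hlk, hll⟩ :=
    gCH_entries hΩopen hNsm hNpos h0 hN0 hμ hHol1 hAhol1 w hw
  set p₀ : Fin (d+1) → ℂ := Fin.snoc 0 w with hp₀def
  set c : ℂ := ((1 - ‖w‖ ^ 2 : ℝ) : ℂ) with hcdef
  have hc0 : (0:ℝ) < 1 - ‖w‖ ^ 2 := by
    have : ‖w‖ ^ 2 < 1 := by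
      calc ‖w‖ ^ 2 ≤ ‖w‖ := by nlinarith [norm_nonneg w]
        _ < 1 := hw
    linarith
  have hcne : c ≠ 0 := by
    rw [hcdef]
    exact_mod_cast hc0.ne'
  set M : Matrix (Fin d) (Fin d) ℂ := gOmMat d μ N 0 with hMdef
  have hMdetu : IsUnit M.det := isUnit_iff_ne_zero.2 (ne_of_gt (hgOmPD 0 h0).det_pos)
  have hMmul : M * M⁻¹ = 1 := Matrix.mul_nonsing_inv M hMdetu
  set K : Matrix (Fin (d+1)) (Fin (d+1)) ℂ := Matrix.of (fun α β =>
    Fin.lastCases (Fin.lastCases (c^2) (fun _ => 0) β)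
      (fun j => Fin.lastCases 0 (fun k => c * M⁻¹ j k) β) α) with hKdef
  have hKcc : ∀ i k : Fin d, K i.castSucc k.castSucc = c * M⁻¹ i k := by
    intro i k
    simp [hKdef]
  have hKcl : ∀ i : Fin d, K i.castSucc (Fin.last d) = 0 := by
    intro i
    simp [hKdef]
  have hKlc : ∀ k : Fin d, K (Fin.last d) k.castSucc = 0 := by
    intro k
    simp [hKdef]
  have hKll : K (Fin.last d) (Fin.last d) = c ^ 2 := by
    simp [hKdef]
  have hGcc : ∀ j k : Fin d, gCHmat d μ N p₀ j.castSucc k.castSucc = c⁻¹ * M j k :=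
    fun j k => hjk j k
  have hGcl : ∀ j : Fin d, gCHmat d μ N p₀ j.castSucc (Fin.last d) = 0 := fun j => hjl j
  have hGlc : ∀ k : Fin d, gCHmat d μ N p₀ (Fin.last d) k.castSucc = 0 := fun k => hlk k
  have hGll : gCHmat d μ N p₀ (Fin.last d) (Fin.last d) = (c ^ 2)⁻¹ := hll
  have hK : gCHmat d μ N p₀ * K = 1 := by
    ext α β
    rw [Matrix.mul_apply, Fin.sum_univ_castSucc]
    induction α using Fin.lastCases with
    | last =>
      induction β using Fin.lastCases with
      | last =>
        rw [hGll, hKll]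
        rw [Finset.sum_eq_zero (fun i _ => by rw [hGlc i, zero_mul])]
        rw [Matrix.one_apply_eq]
        field_simp
        ring
      | cast k =>
        rw [hGll, hKlc k]
        rw [Finset.sum_eq_zero (fun i _ => by rw [hGlc i, zero_mul])]
        rw [Matrix.one_apply_ne (Fin.ne_of_gt (Fin.castSucc_lt_last k))]
        ring
    | cast j =>
      induction β using Fin.lastCases with
      | last =>
        rw [hGcl j, hKll]
        rw [Finset.sum_eq_zero (fun i _ => by rw [hKcl i, mul_zero])]
        rw [Matrix.one_apply_ne (Fin.ne_of_lt (Fin.castSucc_lt_last j))]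
        ring
      | cast k =>
        rw [hGcl j, hKlc k]
        have e2 : ∀ i ∈ Finset.univ, gCHmat d μ N p₀ j.castSucc i.castSucc *
            K i.castSucc k.castSucc = M j i * M⁻¹ i k := by
          intro i _
          rw [hGcc j i, hKcc i k]
          field_simp
        rw [Finset.sum_congr rfl e2, ← Matrix.mul_apply, hMmul]
        simp [Matrix.one_apply, Fin.castSucc_inj]
  have hinv : (gCHmat d μ N p₀)⁻¹ = K := Matrix.inv_eq_right_inv hK
  constructor
  · rw [hinv, hKll, hcdef]
    push_cast
    ring
  · intro j k
    rw [hinv, hKcc j k]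
end GomSec
end
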